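/- arXiv:1510.03219 — 8 statements merged into one kernel-verified Lean document; each statement's English description precedes it below -/
import Mathlib

section
/- Let c > 0, ξ ∈ ℝ, and a ∈ (0, c). If the normalization condition ∫₀^a (ξ + (c² − a²)/2 − s²)·√((a² − s²)/(c² − s²)) ds = 0 holds, then 2ξ + c² < 3a². (Equivalently, with γ = −a², the quantity f(ξ) = 3γ + 2ξ + c² is strictly negative whenever the normalization holds with a ∈ (0, c).) -/
/-!
If `2ξ + c² ≥ 3a²`, the first factor of the integrand is at least `a² − s²`, which is positive on
`(0, a)`; the square-root weight is positive there too, so the integral would be positive.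
-/

open Set

section SqrtRatio

variable {a c : ℝ}

lemma sqrt_ratio_pos {s : ℝ} (hs : s ^ 2 < a ^ 2) (hac : a ^ 2 < c ^ 2) :
    0 < √((a ^ 2 - s ^ 2) / (c ^ 2 - s ^ 2)) :=
  Real.sqrt_pos.mpr (div_pos (by linarith) (by linarith))

lemma continuousOn_sqrt_ratio (hac : a ^ 2 < c ^ 2) :
    ContinuousOn (fun s => √((a ^ 2 - s ^ 2) / (c ^ 2 - s ^ 2))) (Icc (-a) a) := by
  refine Real.continuous_sqrt.comp_continuousOn
    (ContinuousOn.div (by fun_prop) (by fun_prop) fun s hs => ?_)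
  have : s ^ 2 ≤ a ^ 2 := sq_le_sq' hs.1 hs.2
  linarith

end SqrtRatio

lemma integral_normalization_pos {c ξ a : ℝ} (ha : 0 < a) (hac : a < c)
    (hξ : 3 * a ^ 2 ≤ 2 * ξ + c ^ 2) :
    0 < ∫ s in (0:ℝ)..a,
      (ξ + (c ^ 2 - a ^ 2) / 2 - s ^ 2) * √((a ^ 2 - s ^ 2) / (c ^ 2 - s ^ 2)) := by
  have hac2 : a ^ 2 < c ^ 2 := pow_lt_pow_left₀ hac ha.le two_ne_zero
  refine intervalIntegral.intervalIntegral_pos_of_pos_on ?_ (fun s hs => ?_) ha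
  · have hcont : ContinuousOn (fun s =>
        (ξ + (c ^ 2 - a ^ 2) / 2 - s ^ 2) * √((a ^ 2 - s ^ 2) / (c ^ 2 - s ^ 2))) (Icc (-a) a) :=
      ContinuousOn.mul (by fun_prop) (continuousOn_sqrt_ratio hac2)
    refine (hcont.mono ?_).intervalIntegrable
    rw [uIcc_of_le ha.le]
    exact Icc_subset_Icc_left (by linarith)
  · have hs2 : s ^ 2 < a ^ 2 := pow_lt_pow_left₀ hs.2 hs.1.le two_ne_zero
    have hfactor : a ^ 2 - s ^ 2 ≤ ξ + (c ^ 2 - a ^ 2) / 2 - s ^ 2 := by linarith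
    exact mul_pos (by linarith) (sqrt_ratio_pos hs2 hac2)

theorem normalization_implies_f_negative_general (c ξ a : ℝ) (ha : 0 < a) (hac : a < c)
    (hnorm : ∫ s in (0:ℝ)..a,
        (ξ + (c ^ 2 - a ^ 2) / 2 - s ^ 2) * Real.sqrt ((a ^ 2 - s ^ 2) / (c ^ 2 - s ^ 2)) = 0) :
    2 * ξ + c ^ 2 < 3 * a ^ 2 := by
  by_contra h
  exact (integral_normalization_pos ha hac (not_lt.mp h)).ne' hnorm

/-- Let `c > 0`, `ξ ∈ ℝ`, `a ∈ (0, c)`. If the normalization condition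
`∫₀^a (ξ + (c² − a²)/2 − s²)·√((a² − s²)/(c² − s²)) ds = 0` holds, then `2ξ + c² < 3a²`. -/
theorem normalization_implies_f_negative (c ξ a : ℝ) (hc : 0 < c) (ha : 0 < a) (hac : a < c)
    (hnorm : ∫ s in (0:ℝ)..a,
        (ξ + (c ^ 2 - a ^ 2) / 2 - s ^ 2) * Real.sqrt ((a ^ 2 - s ^ 2) / (c ^ 2 - s ^ 2)) = 0) :
    2 * ξ + c ^ 2 < 3 * a ^ 2 :=
  normalization_implies_f_negative_general c ξ a ha hac hnorm
end

section
/- Let c > 0 and let a : (−c²/2, c²/3) → (0, c) be differentiable with ∫₀^{a(ξ)} (ξ + (c² − a(ξ)²)/2 − s²)·√((a(ξ)² − s²)/(c² − s²)) ds = 0 for every ξ in the interval. Define h(ξ) = −(∫₀^{a(ξ)} s²·((c² − s²)(a(ξ)² − s²))^{−1/2} ds)/(∫₀^{a(ξ)} ((c² − s²)(a(ξ)² − s²))^{−1/2} ds). Then for every ξ ∈ (−c²/2, c²/3), (d/dξ)(a(ξ)²) · (3a(ξ)² − 2ξ − c²) = 4·(h(ξ) + a(ξ)²). (In the paper's notation,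 with γ = −a², this is γ′(ξ) = 4(h(ξ) − γ(ξ))/(3γ(ξ) + 2ξ + c²).) -/
/-!
Substituting `s = a t` and writing `g = a²`, every integral in the statement becomes a moment
`∫₀¹ tᵏ w(t) dt` of the band weight `√(1 - t²) / √(c² - g t²)` or of the gap weight
`1 / (√(1 - t²) √(c² - g t²))`; call these `Ψₖ(g)` and `Φₖ(g)`, so that `Ψₖ = Φₖ - Φₖ₊₂`.
The normalization condition reads `(ξ + (c² - g)/2) Ψ₀(g) = g Ψ₂(g)`. Differentiating it along
`g = a(ξ)²` needs `Ψₖ'(g)`, and integrating the derivative of `tᵏ⁺¹ √(1 - t²) / √(c² - g t²)`,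
which vanishes at both ends of `[0, 1]`, gives `2 g Ψₖ' = Φₖ₊₂ - (k + 1) Ψₖ`. These relations
eliminate everything but `Φ₀` and `Φ₂`, leaving `g' (3g - 2ξ - c²) Φ₀ = 4 g (Φ₀ - Φ₂)`.
-/

open Real intervalIntegral MeasureTheory Set Filter Topology

namespace BandEdge

noncomputable section

-- `bandMoment c g k = Ψₖ(g)`, `gapMoment c g k = Φₖ(g)` and `bandMomentDeriv c g k = Ψₖ'(g)`.
def bandWeight (c g t : ℝ) : ℝ := √(1 - t ^ 2) / √(c ^ 2 - g * t ^ 2)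

def gapWeight (c g t : ℝ) : ℝ := (√(1 - t ^ 2) * √(c ^ 2 - g * t ^ 2))⁻¹

def bandMoment (c g : ℝ) (k : ℕ) : ℝ := ∫ t in (0 : ℝ)..1, t ^ k * bandWeight c g t

def gapMoment (c g : ℝ) (k : ℕ) : ℝ := ∫ t in (0 : ℝ)..1, t ^ k * gapWeight c g t

def bandMomentDeriv (c g : ℝ) (k : ℕ) : ℝ :=
  ∫ t in (0 : ℝ)..1, t ^ (k + 2) * bandWeight c g t / (2 * (c ^ 2 - g * t ^ 2))

end

variable {c g t : ℝ}

lemma min_le_sq_sub_mul_sq (ht : t ^ 2 ≤ 1) : min (c ^ 2) (c ^ 2 - g) ≤ c ^ 2 - g * t ^ 2 := by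
  nlinarith [min_le_left (c ^ 2) (c ^ 2 - g), min_le_right (c ^ 2) (c ^ 2 - g), sq_nonneg t]

lemma sq_sub_mul_sq_pos (hc : c ≠ 0) (hg : g < c ^ 2) (ht : t ^ 2 ≤ 1) :
    0 < c ^ 2 - g * t ^ 2 :=
  (lt_min (by positivity) (by linarith)).trans_le (min_le_sq_sub_mul_sq ht)

lemma sq_le_one_of_mem_Icc (ht : t ∈ Icc (0 : ℝ) 1) : t ^ 2 ≤ 1 := by
  nlinarith [ht.1, ht.2]

lemma continuousOn_inv_sqrt_sq_sub_mul_sq (hc : c ≠ 0) (hg : g < c ^ 2) :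
    ContinuousOn (fun t => (√(c ^ 2 - g * t ^ 2))⁻¹) (Icc 0 1) :=
  (continuous_const.sub (continuous_const.mul (continuous_pow 2))).sqrt.continuousOn.inv₀
    fun _ ht => (sqrt_pos.2 (sq_sub_mul_sq_pos hc hg (sq_le_one_of_mem_Icc ht))).ne'

lemma continuousOn_bandWeight (hc : c ≠ 0) (hg : g < c ^ 2) :
    ContinuousOn (bandWeight c g) (Icc 0 1) :=
  (continuous_const.sub (continuous_pow 2)).sqrt.continuousOn.div
    (continuous_const.sub (continuous_const.mul (continuous_pow 2))).sqrt.continuousOn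
    fun _ ht => (sqrt_pos.2 (sq_sub_mul_sq_pos hc hg (sq_le_one_of_mem_Icc ht))).ne'

lemma intervalIntegrable_pow_mul_bandWeight (hc : c ≠ 0) (hg : g < c ^ 2) (k : ℕ) :
    IntervalIntegrable (fun t => t ^ k * bandWeight c g t) volume 0 1 := by
  refine ContinuousOn.intervalIntegrable ?_
  rw [uIcc_of_le zero_le_one]
  exact (continuous_pow k).continuousOn.mul (continuousOn_bandWeight hc hg)

lemma intervalIntegrable_pow_mul_gapWeight (hc : c ≠ 0) (hg : g < c ^ 2) (k : ℕ) :
    IntervalIntegrable (fun t => t ^ k * gapWeight c g t) volume 0 1 := by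
  have hsing : IntervalIntegrable (fun t : ℝ => (√(1 - t ^ 2))⁻¹) volume 0 1 := by
    simpa only [sqrt_inv] using
      Polynomial.Chebyshev.intervalIntegrable_sqrt_one_sub_sq_inv.mono_set
        (uIcc_subset_uIcc (by norm_num : (0:ℝ) ∈ uIcc (-1) 1) (by norm_num : (1:ℝ) ∈ uIcc (-1) 1))
  have hreg : ContinuousOn (fun t : ℝ => t ^ k * (√(c ^ 2 - g * t ^ 2))⁻¹) (uIcc 0 1) := by
    rw [uIcc_of_le zero_le_one]
    exact (continuous_pow k).continuousOn.mul (continuousOn_inv_sqrt_sq_sub_mul_sq hc hg)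
  have hfactor : (fun t => t ^ k * gapWeight c g t) =
      fun t => (√(1 - t ^ 2))⁻¹ * (t ^ k * (√(c ^ 2 - g * t ^ 2))⁻¹) := by
    funext t
    rw [gapWeight, mul_inv]
    ring
  exact hfactor ▸ hsing.mul_continuousOn hreg

lemma bandWeight_eq_mul_gapWeight (c g t : ℝ) :
    bandWeight c g t = (1 - t ^ 2) * gapWeight c g t := by
  rcases eq_or_ne √(1 - t ^ 2) 0 with hu | hu
  · simp [bandWeight, gapWeight, hu]
  · rw [bandWeight, gapWeight]
    field_simp
    rw [sq_sqrt (sqrt_ne_zero'.1 hu).le]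

lemma bandMoment_eq_gapMoment_sub (hc : c ≠ 0) (hg : g < c ^ 2) (k : ℕ) :
    bandMoment c g k = gapMoment c g k - gapMoment c g (k + 2) := by
  rw [bandMoment, gapMoment, gapMoment,
    ← integral_sub (intervalIntegrable_pow_mul_gapWeight hc hg k)
      (intervalIntegrable_pow_mul_gapWeight hc hg (k + 2))]
  congr 1
  funext t
  rw [bandWeight_eq_mul_gapWeight]
  ring

lemma gapWeight_pos (hc : c ≠ 0) (hg : g < c ^ 2) (ht : t ∈ Ioo (-1) 1) : 0 < gapWeight c g t := by
  have hu : 0 < 1 - t ^ 2 := by nlinarith [ht.1, ht.2]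
  have hv := sq_sub_mul_sq_pos hc hg (t := t) (by linarith)
  unfold gapWeight
  positivity

lemma gapMoment_zero_pos (hc : c ≠ 0) (hg : g < c ^ 2) : 0 < gapMoment c g 0 := by
  simpa [gapMoment] using intervalIntegral_pos_of_pos_on
    (by simpa using intervalIntegrable_pow_mul_gapWeight hc hg 0)
    (fun t ht => gapWeight_pos hc hg ⟨by linarith [ht.1], ht.2⟩) zero_lt_one

lemma hasDerivAt_bandWeight_param (hv : 0 < c ^ 2 - g * t ^ 2) :
    HasDerivAt (fun x => bandWeight c x t) (t ^ 2 * bandWeight c g t / (2 * (c ^ 2 - g * t ^ 2)))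
      g := by
  have hlin : HasDerivAt (fun x => c ^ 2 - x * t ^ 2) (-t ^ 2) g := by
    simpa using ((hasDerivAt_id g).mul_const (t ^ 2)).const_sub (c ^ 2)
  unfold bandWeight
  refine ((hasDerivAt_const g √(1 - t ^ 2)).fun_div (hlin.sqrt hv.ne')
    (sqrt_pos.2 hv).ne').congr_deriv ?_
  have := sq_sqrt hv.le
  field_simp
  rw [this]
  ring

lemma hasDerivAt_bandWeight (hu : 0 < 1 - t ^ 2) (hv : 0 < c ^ 2 - g * t ^ 2) :
    HasDerivAt (bandWeight c g)
      (g * t * bandWeight c g t / (c ^ 2 - g * t ^ 2) - t * gapWeight c g t) t := by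
  have hnum : HasDerivAt (fun x => 1 - x ^ 2) (-(2 * t)) t := by
    simpa using (hasDerivAt_pow 2 t).const_sub 1
  have hden : HasDerivAt (fun x => c ^ 2 - g * x ^ 2) (-(g * (2 * t))) t := by
    simpa using ((hasDerivAt_pow 2 t).const_mul g).const_sub (c ^ 2)
  unfold bandWeight gapWeight
  refine ((hnum.sqrt hu.ne').fun_div (hden.sqrt hv.ne') (sqrt_pos.2 hv).ne').congr_deriv ?_
  set v := c ^ 2 - g * t ^ 2
  have hsv := sq_sqrt hv.le
  field_simp
  rw [hsv]
  ring

lemma intervalIntegrable_bandMomentDeriv_integrand (hc : c ≠ 0) (hg : g < c ^ 2) (k : ℕ) :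
    IntervalIntegrable (fun t => t ^ (k + 2) * bandWeight c g t / (2 * (c ^ 2 - g * t ^ 2)))
      volume 0 1 := by
  refine ContinuousOn.intervalIntegrable ?_
  rw [uIcc_of_le zero_le_one]
  exact ((continuous_pow _).continuousOn.mul (continuousOn_bandWeight hc hg)).div
    (continuous_const.mul
      (continuous_const.sub (continuous_const.mul (continuous_pow 2)))).continuousOn
    fun t ht => by have := sq_sub_mul_sq_pos hc hg (sq_le_one_of_mem_Icc ht); positivity

lemma two_mul_mul_bandMomentDeriv (hc : c ≠ 0) (hg : g < c ^ 2) (k : ℕ) :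
    2 * g * bandMomentDeriv c g k = gapMoment c g (k + 2) - (k + 1) * bandMoment c g k := by
  have hderiv : ∀ t ∈ Ioo (0 : ℝ) 1, HasDerivAt (fun t => t ^ (k + 1) * bandWeight c g t)
      ((k + 1) * (t ^ k * bandWeight c g t) - t ^ (k + 2) * gapWeight c g t +
        2 * g * (t ^ (k + 2) * bandWeight c g t / (2 * (c ^ 2 - g * t ^ 2)))) t := by
    intro t ht
    have hu : 0 < 1 - t ^ 2 := by nlinarith [ht.1, ht.2]
    have hv := sq_sub_mul_sq_pos hc hg (t := t) (by linarith)
    refine ((hasDerivAt_pow (k + 1) t).mul (hasDerivAt_bandWeight hu hv)).congr_deriv ?_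
    field_simp
    push_cast
    ring
  have hcont : ContinuousOn (fun t => t ^ (k + 1) * bandWeight c g t) (Icc 0 1) :=
    (continuous_pow _).continuousOn.mul (continuousOn_bandWeight hc hg)
  have hband := intervalIntegrable_pow_mul_bandWeight hc hg k
  have hgap := intervalIntegrable_pow_mul_gapWeight hc hg (k + 2)
  have hder := intervalIntegrable_bandMomentDeriv_integrand hc hg k
  have hftc := integral_eq_sub_of_hasDerivAt_of_le zero_le_one hcont hderiv
    (((hband.const_mul _).sub hgap).add (hder.const_mul _))
  rw [integral_add ((hband.const_mul _).sub hgap) (hder.const_mul _),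
    integral_sub (hband.const_mul _) hgap, intervalIntegral.integral_const_mul,
    intervalIntegral.integral_const_mul] at hftc
  have hend : bandWeight c g 1 = 0 := by simp [bandWeight]
  rw [hend, mul_zero, zero_pow k.succ_ne_zero, zero_mul, sub_zero] at hftc
  rw [bandMomentDeriv, gapMoment, bandMoment]
  linear_combination hftc

lemma norm_pow_mul_bandWeight_div_le {δ : ℝ} {k : ℕ} (hδ : 0 < δ) (ht : t ∈ Ioc 0 1)
    (hv : δ ≤ c ^ 2 - g * t ^ 2) :
    ‖t ^ (k + 2) * bandWeight c g t / (2 * (c ^ 2 - g * t ^ 2))‖ ≤ 1 / √δ / (2 * δ) := by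
  have := ht.1
  have := hδ.trans_le hv
  unfold bandWeight
  rw [Real.norm_of_nonneg (by positivity), ← one_mul (1 / √δ)]
  gcongr
  · exact pow_le_one₀ ht.1.le ht.2
  · exact sqrt_le_one.2 (by nlinarith)

lemma hasDerivAt_bandMoment (hc : c ≠ 0) (hg : g < c ^ 2) (k : ℕ) :
    HasDerivAt (fun x => bandMoment c x k) (bandMomentDeriv c g k) g := by
  set δ := min (c ^ 2) ((c ^ 2 - g) / 2)
  have hδ : 0 < δ := lt_min (by positivity) (by linarith)
  have hball : ∀ x ∈ Metric.ball g ((c ^ 2 - g) / 2), (c ^ 2 - g) / 2 < c ^ 2 - x :=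
    fun x hx => by rw [Real.ball_eq_Ioo] at hx; linarith [hx.2]
  have hlower : ∀ x ∈ Metric.ball g ((c ^ 2 - g) / 2), ∀ t : ℝ, t ^ 2 ≤ 1 →
      δ ≤ c ^ 2 - x * t ^ 2 := fun x hx t ht =>
    (min_le_min le_rfl (by linarith [hball x hx])).trans (min_le_sq_sub_mul_sq ht)
  have hsq : ∀ t ∈ uIoc (0 : ℝ) 1, t ^ 2 ≤ 1 := fun t ht => by
    rw [uIoc_of_le zero_le_one] at ht; nlinarith [ht.1, ht.2]
  refine (hasDerivAt_integral_of_dominated_loc_of_deriv_le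
    (F' := fun x t => t ^ (k + 2) * bandWeight c x t / (2 * (c ^ 2 - x * t ^ 2)))
    (bound := fun _ => 1 / √δ / (2 * δ))
    (Metric.ball_mem_nhds g (by linarith : 0 < (c ^ 2 - g) / 2)) ?_
    (intervalIntegrable_pow_mul_bandWeight hc hg k)
    (intervalIntegrable_bandMomentDeriv_integrand hc hg k).def'.aestronglyMeasurable
    ?_ intervalIntegrable_const ?_).2
  · filter_upwards [Metric.ball_mem_nhds g (by linarith : 0 < (c ^ 2 - g) / 2)] with x hx
    exact (intervalIntegrable_pow_mul_bandWeight hc (by linarith [hball x hx]) k).def'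
      |>.aestronglyMeasurable
  · exact ae_of_all _ fun t ht x hx => norm_pow_mul_bandWeight_div_le hδ
      (by rwa [uIoc_of_le zero_le_one] at ht) (hlower x hx t (hsq t ht))
  · refine ae_of_all _ fun t ht x hx => ?_
    have hv := hδ.trans_le (hlower x hx t (hsq t ht))
    exact ((hasDerivAt_bandWeight_param hv).const_mul (t ^ k)).congr_deriv (by ring)

lemma integral_pow_mul_gapWeight_subst {A : ℝ} (hA : 0 < A) (k : ℕ) :
    ∫ s in (0 : ℝ)..A, s ^ k * (√((c ^ 2 - s ^ 2) * (A ^ 2 - s ^ 2)))⁻¹ =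
      A ^ k * gapMoment c (A ^ 2) k := by
  have hsubst := smul_integral_comp_mul_left (a := 0) (b := 1)
    (fun s => s ^ k * (√((c ^ 2 - s ^ 2) * (A ^ 2 - s ^ 2)))⁻¹) A
  simp only [mul_zero, mul_one, smul_eq_mul] at hsubst
  rw [← hsubst, gapMoment, ← intervalIntegral.integral_const_mul,
    ← intervalIntegral.integral_const_mul]
  refine integral_congr fun t ht => ?_
  rw [uIcc_of_le zero_le_one] at ht
  have hu : 0 ≤ 1 - t ^ 2 := by nlinarith [ht.1, ht.2]
  simp only [gapWeight]
  rw [show A ^ 2 - (A * t) ^ 2 = A ^ 2 * (1 - t ^ 2) by ring,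
    show c ^ 2 - (A * t) ^ 2 = c ^ 2 - A ^ 2 * t ^ 2 by ring,
    sqrt_mul' _ (mul_nonneg (sq_nonneg A) hu), sqrt_mul (sq_nonneg A), sqrt_sq hA.le]
  field_simp
  ring

lemma integral_sub_sq_mul_bandWeight_subst {A B : ℝ} (hc : c ≠ 0) (hA : 0 ≤ A)
    (hAc : A ^ 2 < c ^ 2) :
    ∫ s in (0 : ℝ)..A, (B - s ^ 2) * √((A ^ 2 - s ^ 2) / (c ^ 2 - s ^ 2)) =
      A ^ 2 * (B * bandMoment c (A ^ 2) 0 - A ^ 2 * bandMoment c (A ^ 2) 2) := by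
  have hsubst := smul_integral_comp_mul_left (a := 0) (b := 1)
    (fun s => (B - s ^ 2) * √((A ^ 2 - s ^ 2) / (c ^ 2 - s ^ 2))) A
  simp only [mul_zero, mul_one, smul_eq_mul] at hsubst
  rw [← hsubst, ← intervalIntegral.integral_const_mul]
  refine (integral_congr (g := fun t => A ^ 2 * (B * (t ^ 0 * bandWeight c (A ^ 2) t) -
    A ^ 2 * (t ^ 2 * bandWeight c (A ^ 2) t))) fun t ht => ?_).trans ?_
  · rw [uIcc_of_le zero_le_one] at ht
    have hu : 0 ≤ 1 - t ^ 2 := by nlinarith [ht.1, ht.2]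
    simp only [bandWeight]
    rw [show A ^ 2 - (A * t) ^ 2 = A ^ 2 * (1 - t ^ 2) by ring,
      show c ^ 2 - (A * t) ^ 2 = c ^ 2 - A ^ 2 * t ^ 2 by ring,
      sqrt_div (mul_nonneg (sq_nonneg A) hu), sqrt_mul (sq_nonneg A), sqrt_sq hA]
    ring
  · rw [intervalIntegral.integral_const_mul, intervalIntegral.integral_sub
      ((intervalIntegrable_pow_mul_bandWeight hc hAc 0).const_mul _)
      ((intervalIntegrable_pow_mul_bandWeight hc hAc 2).const_mul _),
      intervalIntegral.integral_const_mul, intervalIntegral.integral_const_mul]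
    rfl

lemma mul_gapMoment_eq_of_hasDerivAt_of_normalization {γ : ℝ → ℝ} {ξ d : ℝ} (hc : c ≠ 0)
    (hγ : γ ξ < c ^ 2) (hd : HasDerivAt γ d ξ)
    (hN : ∀ᶠ y in 𝓝 ξ,
      (y + (c ^ 2 - γ y) / 2) * bandMoment c (γ y) 0 = γ y * bandMoment c (γ y) 2) :
    d * (3 * γ ξ - 2 * ξ - c ^ 2) * gapMoment c (γ ξ) 0 =
      4 * γ ξ * (gapMoment c (γ ξ) 0 - gapMoment c (γ ξ) 2) := by
  have hΨ (k : ℕ) := (hasDerivAt_bandMoment hc hγ k).comp ξ hd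
  have hB : HasDerivAt (fun y => y + (c ^ 2 - γ y) / 2) (1 - d / 2) ξ :=
    ((hasDerivAt_id' ξ).fun_add ((hd.const_sub (c ^ 2)).div_const 2)).congr_deriv (by ring)
  have hderiv := ((hB.mul (hΨ 0)).sub (hd.mul (hΨ 2))).unique
    ((hasDerivAt_const ξ (0 : ℝ)).congr_of_eventuallyEq (hN.mono fun _ hy => sub_eq_zero.2 hy))
  have hN₀ := hN.self_of_nhds
  have hF₀ := two_mul_mul_bandMomentDeriv hc hγ 0
  have hF₂ := two_mul_mul_bandMomentDeriv hc hγ 2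
  have hS₀ := bandMoment_eq_gapMoment_sub hc hγ 0
  have hS₂ := bandMoment_eq_gapMoment_sub hc hγ 2
  simp only [Function.comp_apply] at hderiv
  simp only [zero_add, Nat.reduceAdd, Nat.cast_zero, Nat.cast_ofNat] at hF₀ hF₂ hS₀ hS₂
  set g := γ ξ
  set B := ξ + (c ^ 2 - g) / 2
  linear_combination -4 * g * hderiv + 2 * d * B * hF₀ - 2 * d * g * hF₂ +
    2 * (2 * g + d * (B - g)) * hS₀ - 4 * d * hN₀ - 2 * d * g * hS₂

end BandEdge

/-- derivative formula `(a²)′·(3a² − 2ξ − c²) = 4(h + a²)` for the band edge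
`a(ξ)` determined by the normalization condition (formula (2.9) of Lemma 2.1). -/
theorem band_edge_derivative_formula (c : ℝ) (hc : 0 < c) (a : ℝ → ℝ)
    (hrange : ∀ ξ ∈ Set.Ioo (-c ^ 2 / 2) (c ^ 2 / 3), 0 < a ξ ∧ a ξ < c)
    (hdiff : ∀ ξ ∈ Set.Ioo (-c ^ 2 / 2) (c ^ 2 / 3), DifferentiableAt ℝ a ξ)
    (hnorm : ∀ ξ ∈ Set.Ioo (-c ^ 2 / 2) (c ^ 2 / 3),
      ∫ s in (0:ℝ)..(a ξ),
        (ξ + (c ^ 2 - (a ξ) ^ 2) / 2 - s ^ 2) *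
          Real.sqrt (((a ξ) ^ 2 - s ^ 2) / (c ^ 2 - s ^ 2)) = 0) :
    ∀ ξ ∈ Set.Ioo (-c ^ 2 / 2) (c ^ 2 / 3),
      deriv (fun t => (a t) ^ 2) ξ * (3 * (a ξ) ^ 2 - 2 * ξ - c ^ 2) =
        4 * (-(∫ s in (0:ℝ)..(a ξ), s ^ 2 * (Real.sqrt ((c ^ 2 - s ^ 2) * ((a ξ) ^ 2 - s ^ 2)))⁻¹) /
              (∫ s in (0:ℝ)..(a ξ), (Real.sqrt ((c ^ 2 - s ^ 2) * ((a ξ) ^ 2 - s ^ 2)))⁻¹)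
            + (a ξ) ^ 2) := by
  intro ξ hξ
  have hmem : ∀ y ∈ Ioo (-c ^ 2 / 2) (c ^ 2 / 3), 0 < a y ∧ a y ^ 2 < c ^ 2 := fun y hy =>
    ⟨(hrange y hy).1, pow_lt_pow_left₀ (hrange y hy).2 (hrange y hy).1.le two_ne_zero⟩
  obtain ⟨ha, hac⟩ := hmem ξ hξ
  have hN : ∀ᶠ y in 𝓝 ξ, (y + (c ^ 2 - a y ^ 2) / 2) * BandEdge.bandMoment c (a y ^ 2) 0 =
      a y ^ 2 * BandEdge.bandMoment c (a y ^ 2) 2 := by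
    filter_upwards [isOpen_Ioo.mem_nhds hξ] with y hy
    have h := hnorm y hy
    rw [BandEdge.integral_sub_sq_mul_bandWeight_subst hc.ne' (hmem y hy).1.le (hmem y hy).2] at h
    exact sub_eq_zero.1 ((mul_eq_zero.1 h).resolve_left (pow_pos (hmem y hy).1 2).ne')
  have hd : HasDerivAt (fun y => a y ^ 2) (deriv (fun y => a y ^ 2) ξ) ξ :=
    ((hdiff ξ hξ).pow 2).hasDerivAt
  have hode := BandEdge.mul_gapMoment_eq_of_hasDerivAt_of_normalization
    (γ := fun y => a y ^ 2) hc.ne' hac hd hN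
  have hgap₀ := BandEdge.integral_pow_mul_gapWeight_subst (c := c) ha 0
  simp only [pow_zero, one_mul] at hgap₀
  rw [hgap₀, BandEdge.integral_pow_mul_gapWeight_subst ha 2]
  have hpos := BandEdge.gapMoment_zero_pos hc.ne' hac
  field_simp
  linear_combination hode
end

section
/- Let c > 0 and let a : (−c²/2, c²/3) → (0, c) be differentiable with ∫₀^{a(ξ)} (ξ + (c² − a(ξ)²)/2 − s²)·√((a(ξ)² − s²)/(c² − s²)) ds = 0 for every ξ in the interval. Then a is strictly increasing on (−c²/2, c²/3). (Equivalently, γ(ξ) = −a(ξ)² is strictly decreasing, as asserted in Lemma 2.1 of the paper.) -/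
/-!
Write `N(A, ξ)` for the normalization integral with band edge `A`. It is strictly
increasing in `ξ`, and at a zero of `N` the weight `ξ + (c² - A²)/2 - s²` must change
sign on `(0, A)`, which forces `3A² > 2ξ + c²`. Substituting `s = A t` writes `N(A, ξ) / A`
as the integral over `t ∈ [0, 1]` of `√(1 - t²) · A (ξ + (c² - A²)/2 - A²t²) / √(c² - A²t²)`,
and for every fixed `t` this is decreasing in `A` as long as `3A² > 2ξ + c²`.
Hence if `ξ₁ < ξ₂` but `a(ξ₂) ≤ a(ξ₁)`, then `0 = N(a(ξ₁), ξ₁) < N(a(ξ₁), ξ₂)`, while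
`N(a(ξ₁), ξ₂) / a(ξ₁) ≤ N(a(ξ₂), ξ₂) / a(ξ₂) = 0`.
-/

open Set intervalIntegral MeasureTheory

noncomputable section

def bandIntegrand (c A ξ s : ℝ) : ℝ :=
  (ξ + (c ^ 2 - A ^ 2) / 2 - s ^ 2) * √((A ^ 2 - s ^ 2) / (c ^ 2 - s ^ 2))

def bandIntegral (c A ξ : ℝ) : ℝ :=
  ∫ s in (0 : ℝ)..A, bandIntegrand c A ξ s

def scaledIntegrand (c ξ t x : ℝ) : ℝ :=
  x * (ξ + (c ^ 2 - x ^ 2) / 2 - (x * t) ^ 2) / √(c ^ 2 - (x * t) ^ 2)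

end

section

variable {c A ξ : ℝ}

lemma continuousOn_bandIntegrand (hAc : A < c) :
    ContinuousOn (bandIntegrand c A ξ) (Icc 0 A) := by
  refine ContinuousOn.mul (by fun_prop) (ContinuousOn.sqrt (ContinuousOn.div (by fun_prop)
    (by fun_prop) fun s hs => ?_))
  nlinarith [hs.1, hs.2]

lemma sqrt_band_ratio_pos {s : ℝ} (hs : 0 ≤ s) (hsA : s < A) (hAc : A < c) :
    0 < √((A ^ 2 - s ^ 2) / (c ^ 2 - s ^ 2)) :=
  Real.sqrt_pos.2 (div_pos (by nlinarith) (by nlinarith))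

lemma bandIntegral_strictMono (hA : 0 < A) (hAc : A < c) : StrictMono (bandIntegral c A) := by
  intro ξ₁ ξ₂ hξ
  refine integral_lt_integral_of_continuousOn_of_le_of_exists_lt hA
    (continuousOn_bandIntegrand hAc) (continuousOn_bandIntegrand hAc) (fun s _ => ?_)
    ⟨0, left_mem_Icc.2 hA.le, ?_⟩
  · exact mul_le_mul_of_nonneg_right (by linarith) (Real.sqrt_nonneg _)
  · exact mul_lt_mul_of_pos_right (by linarith) (sqrt_band_ratio_pos le_rfl hA hAc)

lemma two_mul_add_sq_lt_of_bandIntegral_eq_zero (hA : 0 < A) (hAc : A < c)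
    (h : bandIntegral c A ξ = 0) : 2 * ξ + c ^ 2 < 3 * A ^ 2 := by
  by_contra! hξ
  refine h.not_gt (intervalIntegral_pos_of_pos_on
    ((continuousOn_bandIntegrand hAc).intervalIntegrable_of_Icc hA.le) (fun s hs => ?_) hA)
  exact mul_pos (by nlinarith [hs.1, hs.2]) (sqrt_band_ratio_pos hs.1.le hs.2 hAc)

lemma intervalIntegrable_bandIntegrand_mul (hA : 0 < A) (hAc : A < c) :
    IntervalIntegrable (fun t => bandIntegrand c A ξ (A * t)) volume 0 1 := by
  simpa [hA.ne'] using
    ((continuousOn_bandIntegrand hAc).intervalIntegrable_of_Icc hA.le).comp_mul_left (c := A)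

lemma bandIntegral_div_eq (hA : A ≠ 0) :
    bandIntegral c A ξ / A = ∫ t in (0 : ℝ)..1, bandIntegrand c A ξ (A * t) := by
  rw [integral_comp_mul_left _ hA, mul_zero, mul_one, smul_eq_mul, bandIntegral, div_eq_inv_mul]

end

section

variable {c ξ t x : ℝ}

lemma bandIntegrand_mul_eq (hx : 0 ≤ x) (ht : t ^ 2 ≤ 1) :
    bandIntegrand c x ξ (x * t) = √(1 - t ^ 2) * scaledIntegrand c ξ t x := by
  have hnum : x ^ 2 - (x * t) ^ 2 = x ^ 2 * (1 - t ^ 2) := by ring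
  rw [bandIntegrand, scaledIntegrand, hnum, Real.sqrt_div (by nlinarith),
    Real.sqrt_mul (sq_nonneg x), Real.sqrt_sq hx]
  ring

lemma hasDerivAt_scaledIntegrand (hD : 0 < c ^ 2 - (x * t) ^ 2) :
    HasDerivAt (scaledIntegrand c ξ t)
      ((c ^ 2 * (ξ + (c ^ 2 - x ^ 2) / 2 - (x * t) ^ 2)
          - x ^ 2 * (1 + 2 * t ^ 2) * (c ^ 2 - (x * t) ^ 2))
        / ((c ^ 2 - (x * t) ^ 2) * √(c ^ 2 - (x * t) ^ 2))) x := by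
  have hsq : HasDerivAt (fun y => (y * t) ^ 2) (2 * x * t ^ 2) x :=
    ((hasDerivAt_mul_const t).pow 2).congr_deriv (by push_cast; ring)
  have hp : HasDerivAt (fun y => ξ + (c ^ 2 - y ^ 2) / 2 - (y * t) ^ 2)
      (-(x * (1 + 2 * t ^ 2))) x :=
    ((((hasDerivAt_pow 2 x).const_sub (c ^ 2)).div_const 2).const_add ξ |>.sub hsq).congr_deriv
      (by push_cast; ring)
  have hden : HasDerivAt (fun y => √(c ^ 2 - (y * t) ^ 2))
      (-(2 * x * t ^ 2) / (2 * √(c ^ 2 - (x * t) ^ 2))) x :=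
    (hsq.const_sub (c ^ 2)).sqrt hD.ne' |>.congr_deriv (by ring)
  have hnum : HasDerivAt (fun y => y * (ξ + (c ^ 2 - y ^ 2) / 2 - (y * t) ^ 2))
      (ξ + (c ^ 2 - x ^ 2) / 2 - (x * t) ^ 2 - x ^ 2 * (1 + 2 * t ^ 2)) x :=
    ((hasDerivAt_id' x).mul hp).congr_deriv (by ring)
  refine (hnum.div hden (Real.sqrt_pos.2 hD).ne').congr_deriv ?_
  have hr : √(c ^ 2 - (x * t) ^ 2) ^ 2 = c ^ 2 - (x * t) ^ 2 := Real.sq_sqrt hD.le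
  have hr0 : √(c ^ 2 - (x * t) ^ 2) ≠ 0 := (Real.sqrt_pos.2 hD).ne'
  generalize √(c ^ 2 - (x * t) ^ 2) = r at hr hr0 ⊢
  rw [← hr]
  field_simp
  linear_combination (2 * ξ + c ^ 2 - x ^ 2 - 2 * x ^ 2 * t ^ 2) * hr

lemma scaledIntegrand_strictAntiOn {a₀ : ℝ} (ha₀ : 0 < a₀) (ht : t ^ 2 ≤ 1)
    (hξ : 2 * ξ + c ^ 2 < 3 * a₀ ^ 2) : StrictAntiOn (scaledIntegrand c ξ t) (Ico a₀ c) := by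
  have hD : ∀ x ∈ Ico a₀ c, 0 < c ^ 2 - (x * t) ^ 2 := fun x hx => by
    nlinarith [mul_le_mul_of_nonneg_left ht (sq_nonneg x), hx.1, hx.2]
  refine strictAntiOn_of_deriv_neg (convex_Ico a₀ c)
    (fun x hx => (hasDerivAt_scaledIntegrand (hD x hx)).continuousAt.continuousWithinAt)
    fun x hx => ?_
  rw [interior_Ico] at hx
  have hxD := hD x (Ioo_subset_Ico_self hx)
  rw [(hasDerivAt_scaledIntegrand hxD).deriv]
  refine div_neg_of_neg_of_pos ?_ (mul_pos hxD (Real.sqrt_pos.2 hxD))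
  have hx₀ : 0 < x := ha₀.trans hx.1
  have hc : 0 < c := hx₀.trans hx.2
  -- `3x² > 2ξ + c²` is exactly `ξ + (c² - x²)/2 - (xt)² < x²(1 - t²)`
  have hp : 0 < c ^ 2 * (x ^ 2 * (1 - t ^ 2) - (ξ + (c ^ 2 - x ^ 2) / 2 - (x * t) ^ 2)) :=
    mul_pos (by positivity) (by nlinarith [hx.1])
  have hq : 0 ≤ x ^ 2 * t ^ 2 * (3 * c ^ 2 - x ^ 2 * (1 + 2 * t ^ 2)) :=
    mul_nonneg (by positivity) (by nlinarith [hx.2])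
  linear_combination hp + hq

end

lemma bandIntegral_div_le {c ξ A₁ A₂ : ℝ} (hA₂ : 0 < A₂) (hA : A₂ ≤ A₁) (hA₁ : A₁ < c)
    (hξ : 2 * ξ + c ^ 2 < 3 * A₂ ^ 2) :
    bandIntegral c A₁ ξ / A₁ ≤ bandIntegral c A₂ ξ / A₂ := by
  have hA₁0 : 0 < A₁ := hA₂.trans_le hA
  rw [bandIntegral_div_eq hA₁0.ne', bandIntegral_div_eq hA₂.ne']
  refine integral_mono_on zero_le_one (intervalIntegrable_bandIntegrand_mul hA₁0 hA₁)
    (intervalIntegrable_bandIntegrand_mul hA₂ (hA.trans_lt hA₁)) fun t ht => ?_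
  have ht2 : t ^ 2 ≤ 1 := by nlinarith [ht.1, ht.2]
  rw [bandIntegrand_mul_eq hA₁0.le ht2, bandIntegrand_mul_eq hA₂.le ht2]
  exact mul_le_mul_of_nonneg_left ((scaledIntegrand_strictAntiOn hA₂ ht2 hξ).antitoneOn
    ⟨le_rfl, hA.trans_lt hA₁⟩ ⟨hA, hA₁⟩ hA) (Real.sqrt_nonneg _)

theorem band_edge_strict_mono_general (c : ℝ) (a : ℝ → ℝ)
    (hrange : ∀ ξ ∈ Set.Ioo (-c ^ 2 / 2) (c ^ 2 / 3), 0 < a ξ ∧ a ξ < c)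
    (hnorm : ∀ ξ ∈ Set.Ioo (-c ^ 2 / 2) (c ^ 2 / 3),
      ∫ s in (0:ℝ)..(a ξ),
        (ξ + (c ^ 2 - (a ξ) ^ 2) / 2 - s ^ 2) *
          Real.sqrt (((a ξ) ^ 2 - s ^ 2) / (c ^ 2 - s ^ 2)) = 0) :
    StrictMonoOn a (Set.Ioo (-c ^ 2 / 2) (c ^ 2 / 3)) := by
  intro ξ₁ hξ₁ ξ₂ hξ₂ hξ
  obtain ⟨ha₁, ha₁c⟩ := hrange ξ₁ hξ₁
  obtain ⟨ha₂, ha₂c⟩ := hrange ξ₂ hξ₂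
  have hN₁ : bandIntegral c (a ξ₁) ξ₁ = 0 := hnorm ξ₁ hξ₁
  have hN₂ : bandIntegral c (a ξ₂) ξ₂ = 0 := hnorm ξ₂ hξ₂
  by_contra! hle
  have hpos : 0 < bandIntegral c (a ξ₁) ξ₂ / a ξ₁ :=
    div_pos (hN₁ ▸ bandIntegral_strictMono ha₁ ha₁c hξ) ha₁
  have hnonpos : bandIntegral c (a ξ₁) ξ₂ / a ξ₁ ≤ 0 :=
    (bandIntegral_div_le ha₂ hle ha₁c
      (two_mul_add_sq_lt_of_bandIntegral_eq_zero ha₂ ha₂c hN₂)).trans_eq (by rw [hN₂, zero_div])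
  exact hnonpos.not_gt hpos

/-- the band edge `a(ξ)` determined by the normalization condition is strictly
increasing on `(−c²/2, c²/3)` (Lemma 2.1 of the paper). -/
theorem band_edge_strict_mono (c : ℝ) (hc : 0 < c) (a : ℝ → ℝ)
    (hrange : ∀ ξ ∈ Set.Ioo (-c ^ 2 / 2) (c ^ 2 / 3), 0 < a ξ ∧ a ξ < c)
    (hdiff : ∀ ξ ∈ Set.Ioo (-c ^ 2 / 2) (c ^ 2 / 3), DifferentiableAt ℝ a ξ)
    (hnorm : ∀ ξ ∈ Set.Ioo (-c ^ 2 / 2) (c ^ 2 / 3),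
      ∫ s in (0:ℝ)..(a ξ),
        (ξ + (c ^ 2 - (a ξ) ^ 2) / 2 - s ^ 2) *
          Real.sqrt (((a ξ) ^ 2 - s ^ 2) / (c ^ 2 - s ^ 2)) = 0) :
    StrictMonoOn a (Set.Ioo (-c ^ 2 / 2) (c ^ 2 / 3)) :=
  band_edge_strict_mono_general c a hrange hnorm
end

section
/- Let c > 0 and let a : (−c²/2, c²/3) → (0, c) be differentiable with ∫₀^{a(ξ)} (ξ + (c² − a(ξ)²)/2 − s²)·√((a(ξ)² − s²)/(c² − s²)) ds = 0 for every ξ in the interval. Set μ(ξ) = −ξ − (c² − a(ξ)²)/2 and h(ξ) = −(∫₀^{a(ξ)} s²·((c² − s²)(a(ξ)² − s²))^{−1/2} ds)/(∫₀^{a(ξ)} ((c² − s²)(a(ξ)² − s²))^{−1/2} ds). Then for every fixed λ > 0 and every ξ ∈ (−c²/2, c²/3), (∂/∂ξ)[ (λ − μ(ξ)) · √((λ + a(ξ)²)/(λ(λ + c²))) ] = (λ − h(ξ)) / √(λ·(λ + a(ξ)²)·(λ + c²)). -/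
/-!
Substituting `s = a sin θ` turns every integral over `[0, a]` into an integral over `[0, π/2]`
of a smooth function of `(A, θ)`, `A = a²`, built from the kernel `(c² - A sin² θ)^(-1/2)`; the
square-root singularities at `s = a` disappear. The normalization `N(A, ξ)` can then be
differentiated under the integral sign, and
`∂N/∂A = (ξ + (c² - A)/2 - A)/2 · ∫ (c² - A sin² θ)^(-1/2)`
because the two integrands differ by an exact `θ`-derivative vanishing at both endpoints.
Differentiating `N(a(ξ)², ξ) = 0` in `ξ` gives Lemma 2.1, and formula (2.10) is the chain rule
combined with it.
-/

open MeasureTheory Set Real Filter Topology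
open scoped Interval

theorem HasDerivAt.inv_sqrt {f : ℝ → ℝ} {f' x : ℝ} (hf : HasDerivAt f f' x) (hx : 0 < f x) :
    HasDerivAt (fun y => (√(f y))⁻¹) (-(f' / 2) * (√(f x))⁻¹ ^ 3) x := by
  have hs := sqrt_pos.2 hx
  refine ((hf.sqrt hx.ne').inv hs.ne').congr_deriv ?_
  field_simp

theorem intervalIntegral.hasDerivAt_integral_of_continuousOn {F F' : ℝ → ℝ → ℝ} {U : Set ℝ}
    {x₀ a b : ℝ} (hU : IsOpen U) (hx₀ : x₀ ∈ U) (hF : ∀ x ∈ U, ContinuousOn (F x) [[a, b]])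
    (hF' : ContinuousOn (Function.uncurry F') (U ×ˢ [[a, b]]))
    (hderiv : ∀ x ∈ U, ∀ t ∈ [[a, b]], HasDerivAt (F · t) (F' x t) x) :
    HasDerivAt (fun x => ∫ t in a..b, F x t) (∫ t in a..b, F' x₀ t) x₀ := by
  obtain ⟨δ, hδ, hball⟩ := Metric.nhds_basis_closedBall.mem_iff.1 (hU.mem_nhds hx₀)
  obtain ⟨C, hC⟩ := (isCompact_closedBall x₀ δ |>.prod isCompact_uIcc).exists_bound_of_continuousOn
    (hF'.mono (prod_mono hball le_rfl))
  have hF'_slice : ∀ x ∈ U, ContinuousOn (F' x) [[a, b]] := fun x hx =>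
    hF'.comp (f := fun t => (x, t)) (by fun_prop) fun t ht => ⟨hx, ht⟩
  refine (intervalIntegral.hasDerivAt_integral_of_dominated_loc_of_deriv_le (bound := fun _ => C)
    (Metric.closedBall_mem_nhds x₀ hδ) ?_ (hF x₀ hx₀).intervalIntegrable ?_ ?_
    intervalIntegrable_const ?_).2
  · filter_upwards [hU.mem_nhds hx₀] with x hx
    exact (hF x hx).mono uIoc_subset_uIcc |>.aestronglyMeasurable measurableSet_uIoc
  · exact (hF'_slice x₀ hx₀).mono uIoc_subset_uIcc |>.aestronglyMeasurable measurableSet_uIoc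
  · exact .of_forall fun t ht x hx => hC (x, t) ⟨hx, uIoc_subset_uIcc ht⟩
  · exact .of_forall fun t ht x hx => hderiv x (hball hx) t (uIoc_subset_uIcc ht)

noncomputable def ellipticKernel (c A θ : ℝ) : ℝ := (√(c ^ 2 - A * sin θ ^ 2))⁻¹

section EllipticKernel

variable {c A : ℝ}

theorem sub_mul_sin_sq_pos (hc : c ≠ 0) (hA : A < c ^ 2) (θ : ℝ) : 0 < c ^ 2 - A * sin θ ^ 2 := by
  have hc2 : 0 < c ^ 2 := by positivity
  rcases (sq_nonneg (sin θ)).eq_or_lt with h | h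
  · simpa [← h]
  · nlinarith [sin_sq_le_one θ]

theorem hasDerivAt_ellipticKernel_param (hc : c ≠ 0) (hA : A < c ^ 2) (θ : ℝ) :
    HasDerivAt (ellipticKernel c · θ) (sin θ ^ 2 / 2 * ellipticKernel c A θ ^ 3) A := by
  have hg : HasDerivAt (fun B => c ^ 2 - B * sin θ ^ 2) (-sin θ ^ 2) A := by
    simpa using ((hasDerivAt_id A).mul_const (sin θ ^ 2)).const_sub (c ^ 2)
  exact (hg.inv_sqrt (sub_mul_sin_sq_pos hc hA θ)).congr_deriv (by unfold ellipticKernel; ring)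

theorem hasDerivAt_ellipticKernel (hc : c ≠ 0) (hA : A < c ^ 2) (θ : ℝ) :
    HasDerivAt (ellipticKernel c A) (A * sin θ * cos θ * ellipticKernel c A θ ^ 3) θ := by
  have hg : HasDerivAt (fun θ => c ^ 2 - A * sin θ ^ 2) (-(2 * A * sin θ * cos θ)) θ :=
    ((((hasDerivAt_sin θ).fun_pow 2).const_mul A).const_sub (c ^ 2)).congr_deriv
      (by push_cast; ring)
  exact (hg.inv_sqrt (sub_mul_sin_sq_pos hc hA θ)).congr_deriv (by unfold ellipticKernel; ring)

theorem continuous_ellipticKernel (hc : c ≠ 0) (hA : A < c ^ 2) : Continuous (ellipticKernel c A) :=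
  (continuous_const.sub (by fun_prop)).sqrt.inv₀ fun θ =>
    (sqrt_pos.2 (sub_mul_sin_sq_pos hc hA θ)).ne'

theorem continuousOn_uncurry_ellipticKernel (hc : c ≠ 0) :
    ContinuousOn (Function.uncurry (ellipticKernel c)) (Iio (c ^ 2) ×ˢ univ) :=
  (Continuous.continuousOn (by fun_prop)).sqrt.inv₀ fun p hp =>
    (sqrt_pos.2 (sub_mul_sin_sq_pos hc hp.1 p.2)).ne'

theorem integral_ellipticKernel_pos (hc : c ≠ 0) (hA : A < c ^ 2) :
    0 < ∫ θ in (0)..(π / 2), ellipticKernel c A θ :=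
  intervalIntegral.intervalIntegral_pos_of_pos_on
    ((continuous_ellipticKernel hc hA).intervalIntegrable 0 (π / 2))
    (fun θ _ => inv_pos.2 (sqrt_pos.2 (sub_mul_sin_sq_pos hc hA θ))) pi_div_two_pos

theorem integral_mul_cos_sq_ellipticKernel (hc : c ≠ 0) (hA : A < c ^ 2) :
    ∫ θ in (0)..(π / 2), A * cos θ ^ 2 * ellipticKernel c A θ =
      A * (∫ θ in (0)..(π / 2), ellipticKernel c A θ) -
        ∫ θ in (0)..(π / 2), A * sin θ ^ 2 * ellipticKernel c A θ := by
  have := continuous_ellipticKernel hc hA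
  rw [← intervalIntegral.integral_const_mul, ← intervalIntegral.integral_sub
    (by apply Continuous.intervalIntegrable; fun_prop)
    (by apply Continuous.intervalIntegrable; fun_prop)]
  congr 1 with θ
  linear_combination (A * ellipticKernel c A θ) * sin_sq_add_cos_sq θ

theorem differentiableAt_integral_mul_cos_sq_ellipticKernel (hc : c ≠ 0) (hA : A < c ^ 2) :
    DifferentiableAt ℝ (fun B => ∫ θ in (0)..(π / 2), B * cos θ ^ 2 * ellipticKernel c B θ) A := by
  have hk := continuousOn_uncurry_ellipticKernel hc
  refine (intervalIntegral.hasDerivAt_integral_of_continuousOn isOpen_Iio hA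
    (F' := fun B θ => cos θ ^ 2 * ellipticKernel c B θ +
      B * cos θ ^ 2 * (sin θ ^ 2 / 2 * ellipticKernel c B θ ^ 3))
    (fun B hB => ?_) ?_ fun B hB θ _ => ?_).differentiableAt
  · have := continuous_ellipticKernel hc hB
    exact Continuous.continuousOn (by fun_prop)
  · simp only [Function.uncurry_def] at hk ⊢
    exact ContinuousOn.mono (by fun_prop) (prod_mono le_rfl (subset_univ _))
  · exact (((hasDerivAt_id B).mul_const _).mul
      (hasDerivAt_ellipticKernel_param hc hB θ)).congr_deriv (by simp)

end EllipticKernel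

section Normalization

variable {c A : ℝ}

/-- The paper's `N(a, ξ)` after the substitution `s = a sin θ`, as a function of `A = a²`. -/
noncomputable def normalization (c ξ A : ℝ) : ℝ :=
  ∫ θ in (0)..(π / 2),
    (ξ + (c ^ 2 - A) / 2 - A * sin θ ^ 2) * (A * cos θ ^ 2 * ellipticKernel c A θ)

theorem normalization_eq_add (hc : c ≠ 0) (hA : A < c ^ 2) (t ξ : ℝ) :
    normalization c t A =
      normalization c ξ A +
        (t - ξ) * ∫ θ in (0)..(π / 2), A * cos θ ^ 2 * ellipticKernel c A θ := by
  have := continuous_ellipticKernel hc hA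
  rw [normalization, normalization, ← intervalIntegral.integral_const_mul,
    ← intervalIntegral.integral_add (by apply Continuous.intervalIntegrable; fun_prop)
      (by apply Continuous.intervalIntegrable; fun_prop)]
  congr 1 with θ
  ring

theorem integral_deriv_normalization_integrand (hc : c ≠ 0) (hA : A < c ^ 2) (m : ℝ) :
    ∫ θ in (0)..(π / 2), ((-1 / 2 - sin θ ^ 2) * (A * cos θ ^ 2 * ellipticKernel c A θ) +
        (m - A * sin θ ^ 2) * (cos θ ^ 2 * ellipticKernel c A θ +
          A * cos θ ^ 2 * (sin θ ^ 2 / 2 * ellipticKernel c A θ ^ 3))) =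
      (m - A) / 2 * ∫ θ in (0)..(π / 2), ellipticKernel c A θ := by
  have hk := continuous_ellipticKernel hc hA
  have hV : ∀ θ ∈ [[0, π / 2]], HasDerivAt
      (fun θ => (m - A * sin θ ^ 2) * sin θ * cos θ * ellipticKernel c A θ / 2)
      (((-1 / 2 - sin θ ^ 2) * (A * cos θ ^ 2 * ellipticKernel c A θ) +
        (m - A * sin θ ^ 2) * (cos θ ^ 2 * ellipticKernel c A θ +
          A * cos θ ^ 2 * (sin θ ^ 2 / 2 * ellipticKernel c A θ ^ 3))) -
        (m - A) / 2 * ellipticKernel c A θ) θ := by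
    intro θ _
    have := (((((hasDerivAt_sin θ).fun_pow 2).const_mul A).const_sub m).mul
      (hasDerivAt_sin θ)).mul (hasDerivAt_cos θ) |>.mul (hasDerivAt_ellipticKernel hc hA θ)
      |>.div_const 2
    simp only [Pi.mul_apply] at this
    refine this.congr_deriv ?_
    linear_combination (A * (sin θ ^ 2 + 1) - m) / 2 * ellipticKernel c A θ * sin_sq_add_cos_sq θ
  rw [← intervalIntegral.integral_const_mul, ← sub_eq_zero, ← intervalIntegral.integral_sub
    (by apply Continuous.intervalIntegrable; fun_prop)
    (by apply Continuous.intervalIntegrable; fun_prop),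
    intervalIntegral.integral_eq_sub_of_hasDerivAt hV
      (by apply Continuous.intervalIntegrable; fun_prop)]
  simp

theorem hasDerivAt_normalization (hc : c ≠ 0) (hA : A < c ^ 2) (ξ : ℝ) :
    HasDerivAt (normalization c ξ)
      ((ξ + (c ^ 2 - A) / 2 - A) / 2 * ∫ θ in (0)..(π / 2), ellipticKernel c A θ) A := by
  have hk := continuousOn_uncurry_ellipticKernel hc
  rw [← integral_deriv_normalization_integrand hc hA]
  unfold normalization
  refine intervalIntegral.hasDerivAt_integral_of_continuousOn isOpen_Iio hA
    (F' := fun B θ => (-1 / 2 - sin θ ^ 2) * (B * cos θ ^ 2 * ellipticKernel c B θ) +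
      (ξ + (c ^ 2 - B) / 2 - B * sin θ ^ 2) *
        (cos θ ^ 2 * ellipticKernel c B θ +
          B * cos θ ^ 2 * (sin θ ^ 2 / 2 * ellipticKernel c B θ ^ 3)))
    (fun B hB => ?_) ?_ fun B hB θ _ => ?_
  · have := continuous_ellipticKernel hc hB
    exact Continuous.continuousOn (by fun_prop)
  · simp only [Function.uncurry_def] at hk ⊢
    exact ContinuousOn.mono (by fun_prop) (prod_mono le_rfl (subset_univ _))
  · have hlin : HasDerivAt (fun B => ξ + (c ^ 2 - B) / 2 - B * sin θ ^ 2) (-1 / 2 - sin θ ^ 2) B :=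
      ((((hasDerivAt_id B).const_sub _).div_const 2).const_add ξ |>.sub
        ((hasDerivAt_id B).mul_const _)).congr_deriv (by ring)
    exact (hlin.mul (((hasDerivAt_id B).mul_const _).mul
      (hasDerivAt_ellipticKernel_param hc hB θ))).congr_deriv (by simp)

/-- Lemma 2.1 of the paper, `(a²)′(3a² - 2ξ - c²) = 4(h + a²)`, multiplied by the denominator
of `h`. -/
theorem deriv_mul_eq_of_normalization_eq_zero (hc : c ≠ 0) {α : ℝ → ℝ} {α' ξ : ℝ}
    (hα : HasDerivAt α α' ξ) (hαc : α ξ < c ^ 2)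
    (hN : ∀ᶠ t in 𝓝 ξ, normalization c t (α t) = 0) :
    α' * (3 * α ξ - 2 * ξ - c ^ 2) * (∫ θ in (0)..(π / 2), ellipticKernel c (α ξ) θ) =
      4 * (α ξ * (∫ θ in (0)..(π / 2), ellipticKernel c (α ξ) θ) -
        ∫ θ in (0)..(π / 2), α ξ * sin θ ^ 2 * ellipticKernel c (α ξ) θ) := by
  set K := fun B => ∫ θ in (0)..(π / 2), B * cos θ ^ 2 * ellipticKernel c B θ
  have hsplit : (fun t => normalization c t (α t)) =ᶠ[𝓝 ξ]
      fun t => normalization c ξ (α t) + (t - ξ) * K (α t) :=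
    (hα.continuousAt.eventually (Iio_mem_nhds hαc)).mono fun t ht =>
      normalization_eq_add hc ht t ξ
  have hderiv := ((hasDerivAt_normalization hc hαc ξ).comp ξ hα).add
    (((hasDerivAt_id ξ).sub_const ξ).mul
      ((differentiableAt_integral_mul_cos_sq_ellipticKernel hc hαc).hasDerivAt.comp ξ hα))
  have hzero : HasDerivAt (fun t => normalization c ξ (α t) + (t - ξ) * K (α t)) 0 ξ :=
    (hasDerivAt_const ξ 0).congr_of_eventuallyEq (hsplit.symm.trans hN)
  have hvanish := hderiv.unique hzero
  simp only [id, sub_self, zero_mul, add_zero, one_mul, Function.comp_apply] at hvanish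
  rw [integral_mul_cos_sq_ellipticKernel hc hαc] at hvanish
  linear_combination -4 * hvanish

end Normalization

theorem integral_eq_integral_comp_mul_sin {b : ℝ} (hb : 0 ≤ b) (g : ℝ → ℝ) :
    ∫ s in (0)..b, g s = ∫ θ in (0)..(π / 2), g (b * sin θ) * (b * cos θ) := by
  have := intervalIntegral.integral_comp_mul_deriv_of_deriv_nonneg (a := 0) (b := π / 2)
    (f := fun θ => b * sin θ) (g := g) (Continuous.continuousOn (by fun_prop))
    (fun θ _ => (hasDerivAt_sin θ).const_mul b) fun θ hθ => mul_nonneg hb <| by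
      simp only [pi_div_two_pos.le, min_eq_left, max_eq_right] at hθ
      exact cos_nonneg_of_mem_Icc ⟨by linarith [hθ.1, pi_pos], hθ.2.le⟩
  simpa using this.symm

theorem ae_cos_pos : ∀ᵐ θ, θ ∈ Ι 0 (π / 2) → 0 < cos θ := by
  filter_upwards [volume.ae_ne (π / 2)] with θ hne hθ
  rw [uIoc_of_le pi_div_two_pos.le] at hθ
  exact cos_pos_of_mem_Ioo ⟨by linarith [hθ.1, pi_pos], lt_of_le_of_ne hθ.2 hne⟩

section Substitution

variable {b c θ : ℝ}

theorem sq_sub_mul_sin_sq : b ^ 2 - (b * sin θ) ^ 2 = (b * cos θ) ^ 2 := by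
  linear_combination (-b ^ 2) * cos_sq_add_sin_sq θ

theorem inv_sqrt_mul_cos_eq (hb : 0 < b) (hθ : 0 < cos θ) :
    (√((c ^ 2 - (b * sin θ) ^ 2) * (b ^ 2 - (b * sin θ) ^ 2)))⁻¹ * (b * cos θ) =
      ellipticKernel c (b ^ 2) θ := by
  have hbθ : 0 < b * cos θ := mul_pos hb hθ
  rw [sq_sub_mul_sin_sq, sqrt_mul' _ (sq_nonneg _), sqrt_sq hbθ.le, ellipticKernel, mul_pow]
  field_simp

theorem normalization_integrand_mul_cos_eq (hb : 0 ≤ b) (hθ : 0 ≤ cos θ) (ξ : ℝ) :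
    (ξ + (c ^ 2 - b ^ 2) / 2 - (b * sin θ) ^ 2) *
        √((b ^ 2 - (b * sin θ) ^ 2) / (c ^ 2 - (b * sin θ) ^ 2)) * (b * cos θ) =
      (ξ + (c ^ 2 - b ^ 2) / 2 - b ^ 2 * sin θ ^ 2) *
        (b ^ 2 * cos θ ^ 2 * ellipticKernel c (b ^ 2) θ) := by
  rw [sq_sub_mul_sin_sq, sqrt_div (sq_nonneg _), sqrt_sq (mul_nonneg hb hθ), ellipticKernel,
    mul_pow]
  ring

theorem integral_normalization_eq (hb : 0 ≤ b) (ξ : ℝ) :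
    ∫ s in (0)..b, (ξ + (c ^ 2 - b ^ 2) / 2 - s ^ 2) * √((b ^ 2 - s ^ 2) / (c ^ 2 - s ^ 2)) =
      normalization c ξ (b ^ 2) := by
  rw [integral_eq_integral_comp_mul_sin hb, normalization]
  refine intervalIntegral.integral_congr fun θ hθ => normalization_integrand_mul_cos_eq hb ?_ ξ
  rw [uIcc_of_le pi_div_two_pos.le] at hθ
  exact cos_nonneg_of_mem_Icc ⟨by linarith [hθ.1, pi_pos], hθ.2⟩

theorem integral_inv_sqrt_eq (hb : 0 < b) :
    ∫ s in (0)..b, (√((c ^ 2 - s ^ 2) * (b ^ 2 - s ^ 2)))⁻¹ =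
      ∫ θ in (0)..(π / 2), ellipticKernel c (b ^ 2) θ := by
  rw [integral_eq_integral_comp_mul_sin hb.le]
  refine intervalIntegral.integral_congr_ae ?_
  filter_upwards [ae_cos_pos] with θ hθ hmem
  exact inv_sqrt_mul_cos_eq hb (hθ hmem)

theorem integral_sq_mul_inv_sqrt_eq (hb : 0 < b) :
    ∫ s in (0)..b, s ^ 2 * (√((c ^ 2 - s ^ 2) * (b ^ 2 - s ^ 2)))⁻¹ =
      ∫ θ in (0)..(π / 2), b ^ 2 * sin θ ^ 2 * ellipticKernel c (b ^ 2) θ := by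
  rw [integral_eq_integral_comp_mul_sin hb.le]
  refine intervalIntegral.integral_congr_ae ?_
  filter_upwards [ae_cos_pos] with θ hθ hmem
  rw [mul_assoc, inv_sqrt_mul_cos_eq hb (hθ hmem)]
  ring

end Substitution

theorem hasDerivAt_sub_mul_sqrt {α : ℝ → ℝ} {α' ξ l c : ℝ} (hα : HasDerivAt α α' ξ) (hl : 0 < l)
    (hα₀ : 0 ≤ α ξ) :
    HasDerivAt (fun t => (l - (-t - (c ^ 2 - α t) / 2)) * √((l + α t) / (l * (l + c ^ 2))))
      ((l + α ξ + α' * (ξ + (c ^ 2 - α ξ) / 2 - α ξ) / 2) / √(l * (l + α ξ) * (l + c ^ 2))) ξ := by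
  have hL : 0 < l * (l + c ^ 2) := by positivity
  have hM : 0 < l + α ξ := by positivity
  have hμ : HasDerivAt (fun t => l - (-t - (c ^ 2 - α t) / 2)) (1 - α' / 2) ξ :=
    ((hasDerivAt_id ξ).neg.sub ((hα.const_sub _).div_const 2) |>.const_sub l).congr_deriv
      (by ring)
  have hQ := ((hα.const_add l).div_const (l * (l + c ^ 2))).sqrt (by positivity)
  refine (hμ.mul hQ).congr_deriv ?_
  rw [sqrt_div hM.le, show l * (l + α ξ) * (l + c ^ 2) = (l + α ξ) * (l * (l + c ^ 2)) by ring,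
    sqrt_mul hM.le]
  have := sqrt_pos.2 hM
  have := sqrt_pos.2 hL
  field_simp
  rw [sq_sqrt hM.le, sq_sqrt hL.le]
  ring

theorem dG_dxi_formula_general (c : ℝ) (a : ℝ → ℝ)
    (hrange : ∀ ξ ∈ Set.Ioo (-c ^ 2 / 2) (c ^ 2 / 3), 0 < a ξ ∧ a ξ < c)
    (hdiff : ∀ ξ ∈ Set.Ioo (-c ^ 2 / 2) (c ^ 2 / 3), DifferentiableAt ℝ a ξ)
    (hnorm : ∀ ξ ∈ Set.Ioo (-c ^ 2 / 2) (c ^ 2 / 3),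
      ∫ s in (0:ℝ)..(a ξ),
        (ξ + (c ^ 2 - (a ξ) ^ 2) / 2 - s ^ 2) *
          Real.sqrt (((a ξ) ^ 2 - s ^ 2) / (c ^ 2 - s ^ 2)) = 0) :
    ∀ l : ℝ, 0 < l → ∀ ξ ∈ Set.Ioo (-c ^ 2 / 2) (c ^ 2 / 3),
      deriv (fun t => (l - (-t - (c ^ 2 - (a t) ^ 2) / 2)) *
          Real.sqrt ((l + (a t) ^ 2) / (l * (l + c ^ 2)))) ξ =
        (l - (-(∫ s in (0:ℝ)..(a ξ), s ^ 2 * (Real.sqrt ((c ^ 2 - s ^ 2) * ((a ξ) ^ 2 - s ^ 2)))⁻¹) /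
              (∫ s in (0:ℝ)..(a ξ), (Real.sqrt ((c ^ 2 - s ^ 2) * ((a ξ) ^ 2 - s ^ 2)))⁻¹))) /
          Real.sqrt (l * (l + (a ξ) ^ 2) * (l + c ^ 2)) := by
  intro l hl ξ hξ
  obtain ⟨ha, hac⟩ := hrange ξ hξ
  have hc : c ≠ 0 := (ha.trans hac).ne'
  have hA : a ξ ^ 2 < c ^ 2 := pow_lt_pow_left₀ hac ha.le two_ne_zero
  have hα : HasDerivAt (fun t => a t ^ 2) (deriv (fun t => a t ^ 2) ξ) ξ :=
    ((hdiff ξ hξ).pow 2).hasDerivAt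
  have hN : ∀ᶠ t in 𝓝 ξ, normalization c t (a t ^ 2) = 0 := by
    filter_upwards [Ioo_mem_nhds hξ.1 hξ.2] with t ht
    rw [← integral_normalization_eq (hrange t ht).1.le]
    exact hnorm t ht
  have hW := integral_ellipticKernel_pos hc hA
  have key := deriv_mul_eq_of_normalization_eq_zero hc hα hA hN
  rw [integral_inv_sqrt_eq ha, integral_sq_mul_inv_sqrt_eq ha,
    (hasDerivAt_sub_mul_sqrt hα hl (sq_nonneg (a ξ))).deriv]
  congr 1
  field_simp
  linear_combination -key

/-- formula (2.10) of Lemma 2.2,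
`∂G(λ,ξ)/∂ξ = (λ − h(ξ))/𝓡(λ,ξ)`, where `G(λ,ξ) = (λ − μ(ξ))·√((λ + a(ξ)²)/(λ(λ + c²)))`,
`μ(ξ) = −ξ − (c² − a(ξ)²)/2` and `h(ξ)` is the normalized first moment of the gap weight. -/
theorem dG_dxi_formula (c : ℝ) (hc : 0 < c) (a : ℝ → ℝ)
    (hrange : ∀ ξ ∈ Set.Ioo (-c ^ 2 / 2) (c ^ 2 / 3), 0 < a ξ ∧ a ξ < c)
    (hdiff : ∀ ξ ∈ Set.Ioo (-c ^ 2 / 2) (c ^ 2 / 3), DifferentiableAt ℝ a ξ)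
    (hnorm : ∀ ξ ∈ Set.Ioo (-c ^ 2 / 2) (c ^ 2 / 3),
      ∫ s in (0:ℝ)..(a ξ),
        (ξ + (c ^ 2 - (a ξ) ^ 2) / 2 - s ^ 2) *
          Real.sqrt (((a ξ) ^ 2 - s ^ 2) / (c ^ 2 - s ^ 2)) = 0) :
    ∀ l : ℝ, 0 < l → ∀ ξ ∈ Set.Ioo (-c ^ 2 / 2) (c ^ 2 / 3),
      deriv (fun t => (l - (-t - (c ^ 2 - (a t) ^ 2) / 2)) *
          Real.sqrt ((l + (a t) ^ 2) / (l * (l + c ^ 2)))) ξ =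
        (l - (-(∫ s in (0:ℝ)..(a ξ), s ^ 2 * (Real.sqrt ((c ^ 2 - s ^ 2) * ((a ξ) ^ 2 - s ^ 2)))⁻¹) /
              (∫ s in (0:ℝ)..(a ξ), (Real.sqrt ((c ^ 2 - s ^ 2) * ((a ξ) ^ 2 - s ^ 2)))⁻¹))) /
          Real.sqrt (l * (l + (a ξ) ^ 2) * (l + c ^ 2)) :=
  dG_dxi_formula_general c a hrange hdiff hnorm
end

section
/- Let c > 0 and let a : (−c²/2, c²/3) → (0, c) be differentiable with ∫₀^{a(ξ)} (ξ + (c² − a(ξ)²)/2 − s²)·√((a(ξ)² − s²)/(c² − s²)) ds = 0 for every ξ in the interval. Define B(ξ) = 24·∫_{a(ξ)}^{c} (ξ + (c² − a(ξ)²)/2 − s²)·√((s² − a(ξ)²)/(c² − s²)) ds and h(ξ) = −(∫₀^{a(ξ)} s²·((c² − s²)(a(ξ)² − s²))^{−1/2} ds)/(∫₀^{a(ξ)} ((c² − s²)(a(ξ)² − s²))^{−1/2} ds). Then B is differentiable and for every ξ ∈ (−c²/2, c²/3), B′(ξ) = 24·∫_{a(ξ)}^{c} (s² + h(ξ)) ·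 ((c² − s²)(s² − a(ξ)²))^{−1/2} ds. -/
/-!
Write `U w = ∫_α^c w(s) √((s² - α²)/(c² - s²)) ds` and
`I w = ∫_α^c w(s) ((c² - s²)(s² - α²))^(-1/2) ds` (`bandIntegral`, `bandPeriod`), and `P w`, `J w`
(`gapIntegral`, `gapPeriod`) for the analogous integrals over the gap `[0, α]`. The heart of the
matter is `dU w/dα = -α I w` and `dP w/dα = α J w`. The substitutions
`s = √(α² cos² θ + c² sin² θ)` on the band and `s = α sin θ` on the gap turn these into integrals
over `[0, π/2]` of functions smooth in `(α, θ)`, which can be differentiated under the integral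
sign; the `α`-derivative of the new integrand is `∓α` times the period integrand plus the
`θ`-derivative of `α sin θ cos θ w(s)/s` (resp. of `α sin θ cos θ w(s)/√(c² - s²)`), which
vanishes at both ends.

With `K = ξ + (c² - a²)/2` we have `B/24 = K U 1 - U s²` and `N = K P 1 - P s² = 0`, so the chain
rule gives `B'/24` and `0 = N'` in terms of `a'`. Eliminating `a'` using `U 1 = I s² - a² I 1`
and `P 1 = a² J 1 - J s²` leaves `B'/24 = I s² + h I 1`.
-/

open Real Set Filter Topology MeasureTheory intervalIntegral

namespace PhaseDerivative

noncomputable section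

theorem intervalIntegrable_and_integral_eq_of_comp_mul_deriv {f f' g G : ℝ → ℝ} {a b : ℝ}
    (hab : a ≤ b) (hf : ContinuousOn f (Icc a b)) (hff' : ∀ x ∈ Ioo a b, HasDerivAt f (f' x) x)
    (hf' : ∀ x ∈ Ioo a b, 0 ≤ f' x) (hG : ContinuousOn G (Icc a b))
    (hgG : EqOn (fun x => g (f x) * f' x) G (Ioo a b)) :
    IntervalIntegrable g volume (f a) (f b) ∧ ∫ u in f a..f b, g u = ∫ x in a..b, G x := by
  rw [← uIcc_of_le hab] at hf hG
  have hmin : Ioo (min a b) (max a b) = Ioo a b := by rw [min_eq_left hab, max_eq_right hab]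
  rw [← hmin] at hff' hf'
  have hGg : EqOn G (fun x => (g ∘ f) x * f' x) (uIoo a b) := by
    rw [uIoo_of_le hab]; exact hgG.symm
  constructor
  · rw [← integrable_comp_mul_deriv_iff_of_deriv_nonneg hf hff' hf']
    exact hG.intervalIntegrable.congr_uIoo hGg
  · rw [← integral_comp_mul_deriv_of_deriv_nonneg hf hff' hf']
    exact (integral_congr_uIoo hGg).symm

theorem hasDerivAt_integral_of_continuousOn_deriv {F F' : ℝ → ℝ → ℝ} {U : Set ℝ} {x₀ : ℝ}
    (a b : ℝ) (hU : U ∈ 𝓝 x₀) (hF : ∀ x ∈ U, Continuous (F x))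
    (hF' : ContinuousOn (Function.uncurry F') (U ×ˢ univ))
    (hdF : ∀ x ∈ U, ∀ t, HasDerivAt (F · t) (F' x t) x) :
    HasDerivAt (fun x => ∫ t in a..b, F x t) (∫ t in a..b, F' x₀ t) x₀ := by
  obtain ⟨ε, hε, hεU⟩ := Metric.nhds_basis_closedBall.mem_iff.1 hU
  obtain ⟨C, hC⟩ := ((isCompact_closedBall x₀ ε).prod isCompact_uIcc).exists_bound_of_continuousOn
    (hF'.mono (prod_mono hεU (subset_univ _)))
  have hx₀ : x₀ ∈ U := mem_of_mem_nhds hU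
  refine (hasDerivAt_integral_of_dominated_loc_of_deriv_le (bound := fun _ => C)
    (Metric.closedBall_mem_nhds x₀ hε) ?_ ((hF x₀ hx₀).intervalIntegrable _ _) ?_ ?_
    intervalIntegrable_const ?_).2
  · filter_upwards [hU] with x hx using (hF x hx).aestronglyMeasurable
  · exact (hF'.comp_continuous (continuous_const.prodMk continuous_id)
      fun t => ⟨hx₀, trivial⟩).aestronglyMeasurable
  · exact ae_of_all _ fun t ht x hx => hC (x, t) ⟨hx, uIoc_subset_uIcc ht⟩
  · exact ae_of_all _ fun t _ x hx => hdF x (hεU hx) t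

theorem sin_pos_and_cos_pos {θ : ℝ} (hθ : θ ∈ Ioo 0 (π / 2)) : 0 < sin θ ∧ 0 < cos θ :=
  ⟨sin_pos_of_pos_of_lt_pi hθ.1 (by linarith [hθ.2, pi_pos]),
    cos_pos_of_mem_Ioo ⟨by linarith [hθ.1, pi_pos], hθ.2⟩⟩

theorem sqrt_div_eq_mul_inv_sqrt_mul {p q : ℝ} (hp : 0 < p) (hq : 0 < q) :
    √(p / q) = p * (√(q * p))⁻¹ := by
  rw [sqrt_div hp.le, sqrt_mul hq.le]
  have := sqrt_pos.2 hp
  have := sqrt_pos.2 hq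
  field_simp
  rw [sq_sqrt hp.le]

def bandRadius (c α θ : ℝ) : ℝ := √(α ^ 2 * cos θ ^ 2 + c ^ 2 * sin θ ^ 2)

def gapRadius (c α θ : ℝ) : ℝ := √(c ^ 2 - α ^ 2 * sin θ ^ 2)

section Radii

variable {c α : ℝ}

theorem bandRadius_sq (θ : ℝ) : bandRadius c α θ ^ 2 = α ^ 2 * cos θ ^ 2 + c ^ 2 * sin θ ^ 2 :=
  sq_sqrt (by positivity)

theorem bandRadius_sq_sub (θ : ℝ) :
    bandRadius c α θ ^ 2 - α ^ 2 = (c ^ 2 - α ^ 2) * sin θ ^ 2 := by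
  rw [bandRadius_sq]; linear_combination α ^ 2 * cos_sq_add_sin_sq θ

theorem sub_bandRadius_sq (θ : ℝ) :
    c ^ 2 - bandRadius c α θ ^ 2 = (c ^ 2 - α ^ 2) * cos θ ^ 2 := by
  rw [bandRadius_sq]; linear_combination -c ^ 2 * cos_sq_add_sin_sq θ

theorem continuous_bandRadius_uncurry : Continuous fun p : ℝ × ℝ => bandRadius c p.1 p.2 := by
  unfold bandRadius; fun_prop

theorem continuous_bandRadius : Continuous (bandRadius c α) := by
  unfold bandRadius; fun_prop

theorem bandRadius_zero (hα : 0 ≤ α) : bandRadius c α 0 = α := by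
  simp [bandRadius, sqrt_sq hα]

theorem bandRadius_pi_div_two (hc : 0 ≤ c) : bandRadius c α (π / 2) = c := by
  simp [bandRadius, sqrt_sq hc]

theorem gapRadius_sq (hαc : α ^ 2 ≤ c ^ 2) (θ : ℝ) :
    gapRadius c α θ ^ 2 = c ^ 2 - α ^ 2 * sin θ ^ 2 :=
  sq_sqrt (by nlinarith [sin_sq_le_one θ, sq_nonneg α])

theorem continuous_gapRadius_uncurry : Continuous fun p : ℝ × ℝ => gapRadius c p.1 p.2 := by
  unfold gapRadius; fun_prop

theorem continuous_gapRadius : Continuous (gapRadius c α) := by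
  unfold gapRadius; fun_prop

theorem gap_substitution (hα : 0 < α) {g G : ℝ → ℝ} (hG : ContinuousOn G (Icc 0 (π / 2)))
    (hgG : ∀ θ ∈ Ioo 0 (π / 2), g (α * sin θ) * (α * cos θ) = G θ) :
    IntervalIntegrable g volume 0 α ∧ ∫ s in 0..α, g s = ∫ θ in 0..π / 2, G θ := by
  have h := intervalIntegrable_and_integral_eq_of_comp_mul_deriv (f := fun θ => α * sin θ)
    (by positivity) (by fun_prop) (fun θ _ => (hasDerivAt_sin θ).const_mul α) ?_ hG hgG
  · simpa using h
  · intro θ hθ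
    have := (sin_pos_and_cos_pos hθ).2
    positivity

variable (hα : 0 < α) (hαc : α < c)
include hα hαc

theorem bandRadicand_pos (θ : ℝ) : 0 < α ^ 2 * cos θ ^ 2 + c ^ 2 * sin θ ^ 2 := by
  have : α ^ 2 * sin θ ^ 2 ≤ c ^ 2 * sin θ ^ 2 := by gcongr
  nlinarith [sin_sq_add_cos_sq θ]

theorem gapRadicand_pos (θ : ℝ) : 0 < c ^ 2 - α ^ 2 * sin θ ^ 2 := by
  have : α ^ 2 * sin θ ^ 2 ≤ α ^ 2 := mul_le_of_le_one_right (sq_nonneg α) (sin_sq_le_one θ)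
  nlinarith

theorem bandRadius_pos (θ : ℝ) : 0 < bandRadius c α θ := sqrt_pos.2 (bandRadicand_pos hα hαc θ)

theorem gapRadius_pos (θ : ℝ) : 0 < gapRadius c α θ := sqrt_pos.2 (gapRadicand_pos hα hαc θ)

theorem hasDerivAt_bandRadius (θ : ℝ) :
    HasDerivAt (bandRadius c α) ((c ^ 2 - α ^ 2) * sin θ * cos θ / bandRadius c α θ) θ := by
  have h := ((((hasDerivAt_cos θ).pow 2).const_mul (α ^ 2)).add
    (((hasDerivAt_sin θ).pow 2).const_mul (c ^ 2))).sqrt (bandRadicand_pos hα hαc θ).ne'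
  refine h.congr_deriv ?_
  simp only [bandRadius, Pi.add_apply, Pi.pow_apply]
  field_simp
  ring

theorem hasDerivAt_bandRadius_left (θ : ℝ) :
    HasDerivAt (bandRadius c · θ) (α * cos θ ^ 2 / bandRadius c α θ) α := by
  have h := ((((hasDerivAt_pow 2 α).mul_const (cos θ ^ 2))).add_const (c ^ 2 * sin θ ^ 2)).sqrt
    (bandRadicand_pos hα hαc θ).ne'
  refine h.congr_deriv ?_
  simp only [bandRadius]
  field_simp
  ring

theorem hasDerivAt_gapRadius (θ : ℝ) :
    HasDerivAt (gapRadius c α) (-(α ^ 2 * sin θ * cos θ) / gapRadius c α θ) θ := by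
  have h := ((((hasDerivAt_sin θ).pow 2).const_mul (α ^ 2)).const_sub (c ^ 2)).sqrt
    (gapRadicand_pos hα hαc θ).ne'
  refine h.congr_deriv ?_
  simp only [gapRadius, Pi.pow_apply]
  field_simp
  ring

theorem hasDerivAt_gapRadius_left (θ : ℝ) :
    HasDerivAt (gapRadius c · θ) (-(α * sin θ ^ 2) / gapRadius c α θ) α := by
  have h := (((hasDerivAt_pow 2 α).mul_const (sin θ ^ 2)).const_sub (c ^ 2)).sqrt
    (gapRadicand_pos hα hαc θ).ne'
  refine h.congr_deriv ?_
  simp only [gapRadius]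
  field_simp
  ring

theorem band_substitution {g G : ℝ → ℝ} (hG : ContinuousOn G (Icc 0 (π / 2)))
    (hgG : ∀ θ ∈ Ioo 0 (π / 2),
      g (bandRadius c α θ) * ((c ^ 2 - α ^ 2) * sin θ * cos θ / bandRadius c α θ) = G θ) :
    IntervalIntegrable g volume α c ∧ ∫ s in α..c, g s = ∫ θ in 0..π / 2, G θ := by
  have h := intervalIntegrable_and_integral_eq_of_comp_mul_deriv (by positivity)
    continuous_bandRadius.continuousOn (fun θ _ => hasDerivAt_bandRadius hα hαc θ) ?_ hG hgG
  · rwa [bandRadius_zero hα.le, bandRadius_pi_div_two (hα.trans hαc).le] at h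
  · intro θ hθ
    obtain ⟨hs, hc⟩ := sin_pos_and_cos_pos hθ
    have := bandRadius_pos hα hαc θ
    have : α ^ 2 < c ^ 2 := by gcongr
    have : 0 < c ^ 2 - α ^ 2 := by linarith
    positivity

end Radii

def bandIntegral (c : ℝ) (w : ℝ → ℝ) (α : ℝ) : ℝ :=
  ∫ s in α..c, w s * √((s ^ 2 - α ^ 2) / (c ^ 2 - s ^ 2))

def bandPeriod (c : ℝ) (w : ℝ → ℝ) (α : ℝ) : ℝ :=
  ∫ s in α..c, w s * (√((c ^ 2 - s ^ 2) * (s ^ 2 - α ^ 2)))⁻¹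

def gapIntegral (c : ℝ) (w : ℝ → ℝ) (α : ℝ) : ℝ :=
  ∫ s in 0..α, w s * √((α ^ 2 - s ^ 2) / (c ^ 2 - s ^ 2))

def gapPeriod (c : ℝ) (w : ℝ → ℝ) (α : ℝ) : ℝ :=
  ∫ s in 0..α, w s * (√((c ^ 2 - s ^ 2) * (α ^ 2 - s ^ 2)))⁻¹

def bandIntegrand (c : ℝ) (w : ℝ → ℝ) (α θ : ℝ) : ℝ :=
  w (bandRadius c α θ) * ((c ^ 2 - α ^ 2) * sin θ ^ 2) / bandRadius c α θ

def bandIntegrandDeriv (c : ℝ) (w : ℝ → ℝ) (α θ : ℝ) : ℝ :=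
  α * ((c ^ 2 - α ^ 2) * sin θ ^ 2 * cos θ ^ 2 *
      (deriv w (bandRadius c α θ) * bandRadius c α θ - w (bandRadius c α θ)) /
        bandRadius c α θ ^ 3 -
    2 * sin θ ^ 2 * w (bandRadius c α θ) / bandRadius c α θ)

section Band

variable {c α : ℝ} {w : ℝ → ℝ}

theorem continuousOn_bandIntegrandDeriv (hw : ContDiff ℝ 1 w) :
    ContinuousOn (Function.uncurry (bandIntegrandDeriv c w)) (Ioo 0 c ×ˢ univ) := by
  have := @continuous_bandRadius_uncurry c
  have := hw.continuous
  have := hw.continuous_deriv le_rfl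
  unfold bandIntegrandDeriv Function.uncurry
  fun_prop (disch := (rintro ⟨β, θ⟩ ⟨⟨h0, h1⟩, -⟩; have := bandRadius_pos h0 h1 θ; positivity))

variable (hα : 0 < α) (hαc : α < c)
include hα hαc

theorem band_pullback_integrand {θ : ℝ} (hθ : θ ∈ Ioo 0 (π / 2)) :
    w (bandRadius c α θ) *
        √((bandRadius c α θ ^ 2 - α ^ 2) / (c ^ 2 - bandRadius c α θ ^ 2)) *
        ((c ^ 2 - α ^ 2) * sin θ * cos θ / bandRadius c α θ) =
      bandIntegrand c w α θ := by
  obtain ⟨hs, hc⟩ := sin_pos_and_cos_pos hθ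
  have hca : 0 < c ^ 2 - α ^ 2 := by nlinarith
  have h : (bandRadius c α θ ^ 2 - α ^ 2) / (c ^ 2 - bandRadius c α θ ^ 2) =
      (sin θ / cos θ) ^ 2 := by
    rw [bandRadius_sq_sub, sub_bandRadius_sq]
    field_simp
  rw [h, sqrt_sq (by positivity), bandIntegrand]
  field_simp

theorem band_pullback_period {θ : ℝ} (hθ : θ ∈ Ioo 0 (π / 2)) :
    w (bandRadius c α θ) *
        (√((c ^ 2 - bandRadius c α θ ^ 2) * (bandRadius c α θ ^ 2 - α ^ 2)))⁻¹ *
        ((c ^ 2 - α ^ 2) * sin θ * cos θ / bandRadius c α θ) =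
      w (bandRadius c α θ) / bandRadius c α θ := by
  obtain ⟨hs, hc⟩ := sin_pos_and_cos_pos hθ
  have hca : 0 < c ^ 2 - α ^ 2 := by nlinarith
  have h : (c ^ 2 - bandRadius c α θ ^ 2) * (bandRadius c α θ ^ 2 - α ^ 2) =
      ((c ^ 2 - α ^ 2) * sin θ * cos θ) ^ 2 := by
    rw [bandRadius_sq_sub, sub_bandRadius_sq]
    ring
  have := bandRadius_pos hα hαc θ
  rw [h, sqrt_sq (by positivity)]
  field_simp

theorem continuous_bandIntegrand (hw : Continuous w) : Continuous (bandIntegrand c w α) := by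
  have := @continuous_bandRadius c α
  unfold bandIntegrand
  exact Continuous.div (by fun_prop) (by fun_prop) fun θ => (bandRadius_pos hα hαc θ).ne'

theorem continuous_bandPeriodIntegrand (hw : Continuous w) :
    Continuous fun θ => w (bandRadius c α θ) / bandRadius c α θ := by
  have := @continuous_bandRadius c α
  exact Continuous.div (by fun_prop) (by fun_prop) fun θ => (bandRadius_pos hα hαc θ).ne'

theorem intervalIntegrable_and_bandIntegral_eq (hw : Continuous w) :
    IntervalIntegrable (fun s => w s * √((s ^ 2 - α ^ 2) / (c ^ 2 - s ^ 2))) volume α c ∧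
      bandIntegral c w α = ∫ θ in 0..π / 2, bandIntegrand c w α θ :=
  band_substitution hα hαc (continuous_bandIntegrand hα hαc hw).continuousOn
    fun _ hθ => band_pullback_integrand hα hαc hθ

theorem intervalIntegrable_and_bandPeriod_eq (hw : Continuous w) :
    IntervalIntegrable (fun s => w s * (√((c ^ 2 - s ^ 2) * (s ^ 2 - α ^ 2)))⁻¹) volume α c ∧
      bandPeriod c w α = ∫ θ in 0..π / 2, w (bandRadius c α θ) / bandRadius c α θ :=
  band_substitution hα hαc (continuous_bandPeriodIntegrand hα hαc hw).continuousOn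
    fun _ hθ => band_pullback_period hα hαc hθ

theorem hasDerivAt_bandIntegrand (hw : ContDiff ℝ 1 w) (θ : ℝ) :
    HasDerivAt (bandIntegrand c w · θ) (bandIntegrandDeriv c w α θ) α := by
  have hσ := hasDerivAt_bandRadius_left hα hαc θ
  have h := ((((hw.differentiable one_ne_zero _).hasDerivAt).comp α hσ).mul
    (((hasDerivAt_pow 2 α).const_sub (c ^ 2)).mul_const (sin θ ^ 2))).div hσ
    (bandRadius_pos hα hαc θ).ne'
  refine h.congr_deriv ?_
  have := bandRadius_pos hα hαc θ
  simp only [bandIntegrandDeriv, Function.comp_apply, Pi.mul_apply]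
  field_simp
  ring

theorem hasDerivAt_band_boundary_term (hw : ContDiff ℝ 1 w) (θ : ℝ) :
    HasDerivAt (fun θ => α * sin θ * cos θ * w (bandRadius c α θ) / bandRadius c α θ)
      (bandIntegrandDeriv c w α θ + α * (w (bandRadius c α θ) / bandRadius c α θ)) θ := by
  have hσ := hasDerivAt_bandRadius hα hαc θ
  have h := ((((hasDerivAt_sin θ).const_mul α).mul (hasDerivAt_cos θ)).mul
    (((hw.differentiable one_ne_zero _).hasDerivAt).comp θ hσ)).div hσ (bandRadius_pos hα hαc θ).ne'
  refine h.congr_deriv ?_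
  have := bandRadius_pos hα hαc θ
  simp only [bandIntegrandDeriv, Function.comp_apply, Pi.mul_apply]
  field_simp
  linear_combination bandRadius c α θ ^ 2 * w (bandRadius c α θ) * sin_sq_add_cos_sq θ

theorem integral_bandIntegrandDeriv (hw : ContDiff ℝ 1 w) :
    ∫ θ in 0..π / 2, bandIntegrandDeriv c w α θ =
      -α * ∫ θ in 0..π / 2, w (bandRadius c α θ) / bandRadius c α θ := by
  have hD : Continuous (bandIntegrandDeriv c w α) :=
    (continuousOn_bandIntegrandDeriv hw).comp_continuous
      (continuous_const.prodMk continuous_id) fun _ => ⟨⟨hα, hαc⟩, trivial⟩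
  have hP := (continuous_bandPeriodIntegrand hα hαc hw.continuous).const_mul α
  have h := integral_eq_sub_of_hasDerivAt (fun θ _ => hasDerivAt_band_boundary_term hα hαc hw θ)
    ((hD.add hP).intervalIntegrable 0 (π / 2))
  rw [integral_add (hD.intervalIntegrable _ _) (hP.intervalIntegrable _ _),
    intervalIntegral.integral_const_mul] at h
  simp only [cos_pi_div_two, sin_zero, mul_zero, zero_mul, zero_div, sub_zero] at h
  linarith

theorem hasDerivAt_bandIntegral (hw : ContDiff ℝ 1 w) :
    HasDerivAt (bandIntegral c w) (-α * bandPeriod c w α) α := by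
  have hwc := hw.continuous
  have hU : Ioo 0 c ∈ 𝓝 α := Ioo_mem_nhds hα hαc
  have h := hasDerivAt_integral_of_continuousOn_deriv 0 (π / 2) hU
    (fun β hβ => continuous_bandIntegrand hβ.1 hβ.2 hwc) (continuousOn_bandIntegrandDeriv hw)
    (fun β hβ => hasDerivAt_bandIntegrand hβ.1 hβ.2 hw)
  rw [integral_bandIntegrandDeriv hα hαc hw,
    ← (intervalIntegrable_and_bandPeriod_eq hα hαc hwc).2] at h
  exact h.congr_of_eventuallyEq (eventually_of_mem hU fun β hβ =>
    (intervalIntegrable_and_bandIntegral_eq hβ.1 hβ.2 hwc).2)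

end Band

def gapIntegrand (c : ℝ) (w : ℝ → ℝ) (α θ : ℝ) : ℝ :=
  w (α * sin θ) * (α ^ 2 * cos θ ^ 2) / gapRadius c α θ

def gapIntegrandDeriv (c : ℝ) (w : ℝ → ℝ) (α θ : ℝ) : ℝ :=
  α * (α * sin θ * cos θ ^ 2 * deriv w (α * sin θ) / gapRadius c α θ +
    2 * cos θ ^ 2 * w (α * sin θ) / gapRadius c α θ +
    α ^ 2 * sin θ ^ 2 * cos θ ^ 2 * w (α * sin θ) / gapRadius c α θ ^ 3)

section Gap

variable {c α : ℝ} {w : ℝ → ℝ}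

theorem continuousOn_gapIntegrandDeriv (hw : ContDiff ℝ 1 w) :
    ContinuousOn (Function.uncurry (gapIntegrandDeriv c w)) (Ioo 0 c ×ˢ univ) := by
  have := @continuous_gapRadius_uncurry c
  have := hw.continuous
  have := hw.continuous_deriv le_rfl
  unfold gapIntegrandDeriv Function.uncurry
  fun_prop (disch := (rintro ⟨β, θ⟩ ⟨⟨h0, h1⟩, -⟩; have := gapRadius_pos h0 h1 θ; positivity))

theorem sq_sub_mul_sin_sq (θ : ℝ) : α ^ 2 - (α * sin θ) ^ 2 = (α * cos θ) ^ 2 := by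
  linear_combination -α ^ 2 * cos_sq_add_sin_sq θ

variable (hα : 0 < α) (hαc : α < c)
include hα hαc

theorem sq_sub_mul_sin_sq_eq_gapRadius_sq (θ : ℝ) :
    c ^ 2 - (α * sin θ) ^ 2 = gapRadius c α θ ^ 2 := by
  rw [gapRadius_sq (by gcongr)]; ring

theorem gap_pullback_integrand {θ : ℝ} (hθ : θ ∈ Ioo 0 (π / 2)) :
    w (α * sin θ) * √((α ^ 2 - (α * sin θ) ^ 2) / (c ^ 2 - (α * sin θ) ^ 2)) * (α * cos θ) =
      gapIntegrand c w α θ := by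
  have hc := (sin_pos_and_cos_pos hθ).2
  have hτ := gapRadius_pos hα hαc θ
  rw [sq_sub_mul_sin_sq, sq_sub_mul_sin_sq_eq_gapRadius_sq hα hαc, ← div_pow,
    sqrt_sq (by positivity), gapIntegrand]
  field_simp

theorem gap_pullback_period {θ : ℝ} (hθ : θ ∈ Ioo 0 (π / 2)) :
    w (α * sin θ) * (√((c ^ 2 - (α * sin θ) ^ 2) * (α ^ 2 - (α * sin θ) ^ 2)))⁻¹ * (α * cos θ) =
      w (α * sin θ) / gapRadius c α θ := by
  have hc := (sin_pos_and_cos_pos hθ).2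
  have hτ := gapRadius_pos hα hαc θ
  rw [sq_sub_mul_sin_sq, sq_sub_mul_sin_sq_eq_gapRadius_sq hα hαc, ← mul_pow,
    sqrt_sq (by positivity)]
  field_simp

theorem continuous_gapIntegrand (hw : Continuous w) : Continuous (gapIntegrand c w α) := by
  have := @continuous_gapRadius c α
  unfold gapIntegrand
  exact Continuous.div (by fun_prop) (by fun_prop) fun θ => (gapRadius_pos hα hαc θ).ne'

theorem continuous_gapPeriodIntegrand (hw : Continuous w) :
    Continuous fun θ => w (α * sin θ) / gapRadius c α θ := by
  have := @continuous_gapRadius c α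
  exact Continuous.div (by fun_prop) (by fun_prop) fun θ => (gapRadius_pos hα hαc θ).ne'

theorem intervalIntegrable_and_gapIntegral_eq (hw : Continuous w) :
    IntervalIntegrable (fun s => w s * √((α ^ 2 - s ^ 2) / (c ^ 2 - s ^ 2))) volume 0 α ∧
      gapIntegral c w α = ∫ θ in 0..π / 2, gapIntegrand c w α θ :=
  gap_substitution hα (continuous_gapIntegrand hα hαc hw).continuousOn
    fun _ hθ => gap_pullback_integrand hα hαc hθ

theorem intervalIntegrable_and_gapPeriod_eq (hw : Continuous w) :
    IntervalIntegrable (fun s => w s * (√((c ^ 2 - s ^ 2) * (α ^ 2 - s ^ 2)))⁻¹) volume 0 α ∧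
      gapPeriod c w α = ∫ θ in 0..π / 2, w (α * sin θ) / gapRadius c α θ :=
  gap_substitution hα (continuous_gapPeriodIntegrand hα hαc hw).continuousOn
    fun _ hθ => gap_pullback_period hα hαc hθ

theorem hasDerivAt_gapIntegrand (hw : ContDiff ℝ 1 w) (θ : ℝ) :
    HasDerivAt (gapIntegrand c w · θ) (gapIntegrandDeriv c w α θ) α := by
  have hτ := hasDerivAt_gapRadius_left hα hαc θ
  have h := ((((hw.differentiable one_ne_zero _).hasDerivAt).comp α
    ((hasDerivAt_id α).mul_const (sin θ))).mul
    ((hasDerivAt_pow 2 α).mul_const (cos θ ^ 2))).div hτ (gapRadius_pos hα hαc θ).ne'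
  refine h.congr_deriv ?_
  have := gapRadius_pos hα hαc θ
  simp only [gapIntegrandDeriv, Function.comp_apply, Pi.mul_apply, id]
  field_simp
  ring

theorem hasDerivAt_gap_boundary_term (hw : ContDiff ℝ 1 w) (θ : ℝ) :
    HasDerivAt (fun θ => α * sin θ * cos θ * w (α * sin θ) / gapRadius c α θ)
      (gapIntegrandDeriv c w α θ - α * (w (α * sin θ) / gapRadius c α θ)) θ := by
  have hτ := hasDerivAt_gapRadius hα hαc θ
  have h := ((((hasDerivAt_sin θ).const_mul α).mul (hasDerivAt_cos θ)).mul
    (((hw.differentiable one_ne_zero _).hasDerivAt).comp θ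
      ((hasDerivAt_sin θ).const_mul α))).div hτ (gapRadius_pos hα hαc θ).ne'
  refine h.congr_deriv ?_
  have := gapRadius_pos hα hαc θ
  simp only [gapIntegrandDeriv, Function.comp_apply, Pi.mul_apply]
  field_simp
  linear_combination -w (α * sin θ) * gapRadius c α θ ^ 2 * sin_sq_add_cos_sq θ

theorem integral_gapIntegrandDeriv (hw : ContDiff ℝ 1 w) :
    ∫ θ in 0..π / 2, gapIntegrandDeriv c w α θ =
      α * ∫ θ in 0..π / 2, w (α * sin θ) / gapRadius c α θ := by
  have hD : Continuous (gapIntegrandDeriv c w α) :=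
    (continuousOn_gapIntegrandDeriv hw).comp_continuous
      (continuous_const.prodMk continuous_id) fun _ => ⟨⟨hα, hαc⟩, trivial⟩
  have hP := (continuous_gapPeriodIntegrand hα hαc hw.continuous).const_mul α
  have h := integral_eq_sub_of_hasDerivAt (fun θ _ => hasDerivAt_gap_boundary_term hα hαc hw θ)
    ((hD.sub hP).intervalIntegrable 0 (π / 2))
  rw [integral_sub (hD.intervalIntegrable _ _) (hP.intervalIntegrable _ _),
    intervalIntegral.integral_const_mul] at h
  simp only [cos_pi_div_two, sin_zero, mul_zero, zero_mul, zero_div, sub_zero] at h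
  linarith

theorem hasDerivAt_gapIntegral (hw : ContDiff ℝ 1 w) :
    HasDerivAt (gapIntegral c w) (α * gapPeriod c w α) α := by
  have hwc := hw.continuous
  have hU : Ioo 0 c ∈ 𝓝 α := Ioo_mem_nhds hα hαc
  have h := hasDerivAt_integral_of_continuousOn_deriv 0 (π / 2) hU
    (fun β hβ => continuous_gapIntegrand hβ.1 hβ.2 hwc) (continuousOn_gapIntegrandDeriv hw)
    (fun β hβ => hasDerivAt_gapIntegrand hβ.1 hβ.2 hw)
  rw [integral_gapIntegrandDeriv hα hαc hw,
    ← (intervalIntegrable_and_gapPeriod_eq hα hαc hwc).2] at h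
  exact h.congr_of_eventuallyEq (eventually_of_mem hU fun β hβ =>
    (intervalIntegrable_and_gapIntegral_eq hβ.1 hβ.2 hwc).2)

theorem gapPeriod_one_pos : 0 < gapPeriod c 1 α := by
  rw [(intervalIntegrable_and_gapPeriod_eq hα hαc (w := 1) continuous_const).2]
  refine intervalIntegral_pos_of_pos
    ((continuous_gapPeriodIntegrand hα hαc continuous_const).intervalIntegrable _ _)
    (fun θ => div_pos one_pos (gapRadius_pos hα hαc θ)) (by positivity)

end Gap

section Moments

variable {c α : ℝ} (hα : 0 < α) (hαc : α < c)
include hα hαc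

theorem bandIntegral_sub_sq (k : ℝ) :
    bandIntegral c (fun s => k - s ^ 2) α = k * bandIntegral c 1 α - bandIntegral c (· ^ 2) α := by
  have h1 := (intervalIntegrable_and_bandIntegral_eq hα hαc (w := 1) continuous_const).1
  have h2 := (intervalIntegrable_and_bandIntegral_eq hα hαc (continuous_pow 2)).1
  simp only [bandIntegral, ← intervalIntegral.integral_const_mul,
    ← integral_sub (h1.const_mul k) h2]
  congr 1; ext s; simp only [Pi.one_apply]; ring

theorem gapIntegral_sub_sq (k : ℝ) :
    gapIntegral c (fun s => k - s ^ 2) α = k * gapIntegral c 1 α - gapIntegral c (· ^ 2) α := by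
  have h1 := (intervalIntegrable_and_gapIntegral_eq hα hαc (w := 1) continuous_const).1
  have h2 := (intervalIntegrable_and_gapIntegral_eq hα hαc (continuous_pow 2)).1
  simp only [gapIntegral, ← intervalIntegral.integral_const_mul, ← integral_sub (h1.const_mul k) h2]
  congr 1; ext s; simp only [Pi.one_apply]; ring

theorem bandPeriod_sq_add (h : ℝ) :
    bandPeriod c (fun s => s ^ 2 + h) α = bandPeriod c (· ^ 2) α + h * bandPeriod c 1 α := by
  have h1 := (intervalIntegrable_and_bandPeriod_eq hα hαc (w := 1) continuous_const).1
  have h2 := (intervalIntegrable_and_bandPeriod_eq hα hαc (continuous_pow 2)).1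
  simp only [bandPeriod, ← intervalIntegral.integral_const_mul, ← integral_add h2 (h1.const_mul h)]
  congr 1; ext s; simp only [Pi.one_apply]; ring

theorem bandIntegral_one :
    bandIntegral c 1 α = bandPeriod c (· ^ 2) α - α ^ 2 * bandPeriod c 1 α := by
  have h1 := (intervalIntegrable_and_bandPeriod_eq hα hαc (w := 1) continuous_const).1
  have h2 := (intervalIntegrable_and_bandPeriod_eq hα hαc (continuous_pow 2)).1
  simp only [bandPeriod, ← intervalIntegral.integral_const_mul, ← integral_sub h2 (h1.const_mul _)]
  refine integral_congr_Ioo_of_le hαc.le fun s hs => ?_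
  have : α ^ 2 < s ^ 2 := by gcongr; exact hs.1
  have : s ^ 2 < c ^ 2 := by gcongr; exacts [hα.le.trans hs.1.le, hs.2]
  simp only [Pi.one_apply]
  rw [sqrt_div_eq_mul_inv_sqrt_mul (by linarith) (by linarith)]
  ring

theorem gapIntegral_one :
    gapIntegral c 1 α = α ^ 2 * gapPeriod c 1 α - gapPeriod c (· ^ 2) α := by
  have h1 := (intervalIntegrable_and_gapPeriod_eq hα hαc (w := 1) continuous_const).1
  have h2 := (intervalIntegrable_and_gapPeriod_eq hα hαc (continuous_pow 2)).1
  simp only [gapPeriod, ← intervalIntegral.integral_const_mul, ← integral_sub (h1.const_mul _) h2]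
  refine integral_congr_Ioo_of_le hα.le fun s hs => ?_
  have : s ^ 2 < α ^ 2 := by gcongr; exacts [hs.1.le, hs.2]
  have : α ^ 2 < c ^ 2 := by gcongr
  simp only [Pi.one_apply]
  rw [sqrt_div_eq_mul_inv_sqrt_mul (by linarith) (by linarith)]
  ring

end Moments

section Phase

variable {c : ℝ} {a k : ℝ → ℝ} {a' k' ξ : ℝ}
  (ha : HasDerivAt a a' ξ) (hk : HasDerivAt k k' ξ) (hα : 0 < a ξ) (hαc : a ξ < c)
include ha hk hα hαc

theorem hasDerivAt_bandIntegral_comp :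
    HasDerivAt (fun t => bandIntegral c (fun s => k t - s ^ 2) (a t))
      (k' * bandIntegral c 1 (a ξ) +
        a ξ * a' * (bandPeriod c (· ^ 2) (a ξ) - k ξ * bandPeriod c 1 (a ξ))) ξ := by
  have h1 := (hasDerivAt_bandIntegral hα hαc (w := 1) contDiff_const).comp ξ ha
  have h2 := (hasDerivAt_bandIntegral hα hαc (w := (· ^ 2)) (by fun_prop)).comp ξ ha
  refine (((hk.mul h1).sub h2).congr_of_eventuallyEq ?_).congr_deriv
    (by rw [Function.comp_apply]; ring)
  filter_upwards [ha.continuousAt.preimage_mem_nhds (Ioo_mem_nhds hα hαc)] with t ht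
  exact bandIntegral_sub_sq ht.1 ht.2 (k t)

theorem hasDerivAt_gapIntegral_comp :
    HasDerivAt (fun t => gapIntegral c (fun s => k t - s ^ 2) (a t))
      (k' * gapIntegral c 1 (a ξ) +
        a ξ * a' * (k ξ * gapPeriod c 1 (a ξ) - gapPeriod c (· ^ 2) (a ξ))) ξ := by
  have h1 := (hasDerivAt_gapIntegral hα hαc (w := 1) contDiff_const).comp ξ ha
  have h2 := (hasDerivAt_gapIntegral hα hαc (w := (· ^ 2)) (by fun_prop)).comp ξ ha
  refine (((hk.mul h1).sub h2).congr_of_eventuallyEq ?_).congr_deriv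
    (by rw [Function.comp_apply]; ring)
  filter_upwards [ha.continuousAt.preimage_mem_nhds (Ioo_mem_nhds hα hαc)] with t ht
  exact gapIntegral_sub_sq ht.1 ht.2 (k t)

end Phase

end

end PhaseDerivative

open PhaseDerivative

theorem phase_derivative_formula_general (c : ℝ) (a : ℝ → ℝ)
    (hrange : ∀ ξ ∈ Set.Ioo (-c ^ 2 / 2) (c ^ 2 / 3), 0 < a ξ ∧ a ξ < c)
    (hdiff : ∀ ξ ∈ Set.Ioo (-c ^ 2 / 2) (c ^ 2 / 3), DifferentiableAt ℝ a ξ)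
    (hnorm : ∀ ξ ∈ Set.Ioo (-c ^ 2 / 2) (c ^ 2 / 3),
      ∫ s in (0:ℝ)..(a ξ),
        (ξ + (c ^ 2 - (a ξ) ^ 2) / 2 - s ^ 2) *
          Real.sqrt (((a ξ) ^ 2 - s ^ 2) / (c ^ 2 - s ^ 2)) = 0) :
    ∀ ξ ∈ Set.Ioo (-c ^ 2 / 2) (c ^ 2 / 3),
      HasDerivAt
        (fun t => 24 * ∫ s in (a t)..c,
          (t + (c ^ 2 - (a t) ^ 2) / 2 - s ^ 2) *
            Real.sqrt ((s ^ 2 - (a t) ^ 2) / (c ^ 2 - s ^ 2)))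
        (24 * ∫ s in (a ξ)..c,
          (s ^ 2 +
            (-(∫ s in (0:ℝ)..(a ξ), s ^ 2 * (Real.sqrt ((c ^ 2 - s ^ 2) * ((a ξ) ^ 2 - s ^ 2)))⁻¹) /
              (∫ s in (0:ℝ)..(a ξ), (Real.sqrt ((c ^ 2 - s ^ 2) * ((a ξ) ^ 2 - s ^ 2)))⁻¹))) *
            (Real.sqrt ((c ^ 2 - s ^ 2) * (s ^ 2 - (a ξ) ^ 2)))⁻¹) ξ := by
  intro ξ hξ
  obtain ⟨hα, hαc⟩ := hrange ξ hξ
  have ha := (hdiff ξ hξ).hasDerivAt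
  have hk : HasDerivAt (fun t => t + (c ^ 2 - a t ^ 2) / 2) (1 - a ξ * deriv a ξ) ξ :=
    ((hasDerivAt_id' ξ).add (((ha.pow 2).const_sub _).div_const 2)).congr_deriv (by ring)
  have hB := (hasDerivAt_bandIntegral_comp ha hk hα hαc).const_mul 24
  have hN := hasDerivAt_gapIntegral_comp ha hk hα hαc
  have hN0 : HasDerivAt (fun t => gapIntegral c (fun s => t + (c ^ 2 - a t ^ 2) / 2 - s ^ 2) (a t))
      0 ξ :=
    (hasDerivAt_const ξ 0).congr_of_eventuallyEq
      (by filter_upwards [isOpen_Ioo.mem_nhds hξ] with t ht using hnorm t ht)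
  have hrel := hN.unique hN0
  rw [gapIntegral_one hα hαc] at hrel
  have hJ := gapPeriod_one_pos hα hαc
  have hJ1 : ∫ s in 0..a ξ, (√((c ^ 2 - s ^ 2) * (a ξ ^ 2 - s ^ 2)))⁻¹ = gapPeriod c 1 (a ξ) := by
    simp [gapPeriod]
  refine hB.congr_deriv ?_
  rw [hJ1]
  change _ = 24 * bandPeriod c
    (fun s => s ^ 2 + -gapPeriod c (· ^ 2) (a ξ) / gapPeriod c 1 (a ξ)) (a ξ)
  rw [bandPeriod_sq_add hα hαc, bandIntegral_one hα hαc]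
  field_simp
  linear_combination (-2 * bandPeriod c 1 (a ξ)) * hrel

/-- identity (2.16)(a) of Lemma 2.3 in concrete form: the phase `B(ξ)` is
differentiable with `B′(ξ) = 24·∫_{a(ξ)}^{c} (s² + h(ξ))·((c² − s²)(s² − a(ξ)²))^{-1/2} ds`. -/
theorem phase_derivative_formula (c : ℝ) (hc : 0 < c) (a : ℝ → ℝ)
    (hrange : ∀ ξ ∈ Set.Ioo (-c ^ 2 / 2) (c ^ 2 / 3), 0 < a ξ ∧ a ξ < c)
    (hdiff : ∀ ξ ∈ Set.Ioo (-c ^ 2 / 2) (c ^ 2 / 3), DifferentiableAt ℝ a ξ)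
    (hnorm : ∀ ξ ∈ Set.Ioo (-c ^ 2 / 2) (c ^ 2 / 3),
      ∫ s in (0:ℝ)..(a ξ),
        (ξ + (c ^ 2 - (a ξ) ^ 2) / 2 - s ^ 2) *
          Real.sqrt (((a ξ) ^ 2 - s ^ 2) / (c ^ 2 - s ^ 2)) = 0) :
    ∀ ξ ∈ Set.Ioo (-c ^ 2 / 2) (c ^ 2 / 3),
      HasDerivAt
        (fun t => 24 * ∫ s in (a t)..c,
          (t + (c ^ 2 - (a t) ^ 2) / 2 - s ^ 2) *
            Real.sqrt ((s ^ 2 - (a t) ^ 2) / (c ^ 2 - s ^ 2)))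
        (24 * ∫ s in (a ξ)..c,
          (s ^ 2 +
            (-(∫ s in (0:ℝ)..(a ξ), s ^ 2 * (Real.sqrt ((c ^ 2 - s ^ 2) * ((a ξ) ^ 2 - s ^ 2)))⁻¹) /
              (∫ s in (0:ℝ)..(a ξ), (Real.sqrt ((c ^ 2 - s ^ 2) * ((a ξ) ^ 2 - s ^ 2)))⁻¹))) *
            (Real.sqrt ((c ^ 2 - s ^ 2) * (s ^ 2 - (a ξ) ^ 2)))⁻¹) ξ :=
  phase_derivative_formula_general c a hrange hdiff hnorm
end

section
/- Let 0 < a < c and set m = a/c. Define h = −(∫₀^{a} s²·((c² − s²)(a² − s²))^{−1/2} ds)/(∫₀^{a} ((c² − s²)(a² − s²))^{−1/2} ds). Then h = c²·(E(m)/K(m) − 1), i.e. −h·K(m) = c²·(K(m) − E(m)), where K(m) = ∫₀¹ ((1 − t²)(1 − m²t²))^{−1/2} dt and E(m) = ∫₀¹ √((1 − m²t²)/(1 − t²)) dt are the complete elliptic integrals of the first and second kind. -/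
/-!
The substitution `s = a t` turns both integrals over `[0, a]` into integrals over `[0, 1]`: the
denominator becomes `K(m) / c` and the numerator `a² J(m) / c`, where
`J(m) = ∫₀¹ t² ((1 - t²)(1 - m² t²))^(-1/2) dt`, so `h = -c² m² J(m) / K(m)`. Splitting
the numerator `1 = (1 - m² t²) + m² t²` in the integrand of `K` gives `K = E + m² J`, whence
`h = c² (E - K) / K`. Near `t = 1` the integrand of `K` is dominated by
`(1 - m²)^(-1/2) (1 - t²)^(-1/2)`, the derivative of `arcsin` up to a constant.
-/

open MeasureTheory Real intervalIntegral

noncomputable def ellipticK (m : ℝ) : ℝ :=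
  ∫ t in (0:ℝ)..1, (√((1 - t ^ 2) * (1 - m ^ 2 * t ^ 2)))⁻¹

noncomputable def ellipticE (m : ℝ) : ℝ :=
  ∫ t in (0:ℝ)..1, √((1 - m ^ 2 * t ^ 2) / (1 - t ^ 2))

section EllipticIntegrals

variable {m t : ℝ}

lemma inv_sqrt_mul_one_sub_sq_le (hm : m ^ 2 < 1) (ht : t ^ 2 ≤ 1) :
    (√((1 - t ^ 2) * (1 - m ^ 2 * t ^ 2)))⁻¹
      ≤ (√(1 - m ^ 2))⁻¹ * √(1 - t ^ 2)⁻¹ := by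
  rcases ht.eq_or_lt with ht | ht
  · simp [ht]
  have hmt : 1 - m ^ 2 ≤ 1 - m ^ 2 * t ^ 2 := by nlinarith
  rw [Real.sqrt_inv, ← mul_inv, ← Real.sqrt_mul (by linarith), mul_comm (1 - m ^ 2)]
  gcongr

lemma intervalIntegrable_ellipticK_integrand (hm : m ^ 2 < 1) :
    IntervalIntegrable (fun t ↦ (√((1 - t ^ 2) * (1 - m ^ 2 * t ^ 2)))⁻¹) volume 0 1 := by
  have hbound :
      IntervalIntegrable (fun t ↦ (√(1 - m ^ 2))⁻¹ * √(1 - t ^ 2)⁻¹) volume 0 1 :=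
    (Polynomial.Chebyshev.intervalIntegrable_sqrt_one_sub_sq_inv.mono_set
      (by simp [Set.uIcc_of_le, Set.Icc_subset_Icc_left])).const_mul _
  refine hbound.mono_fun' (by fun_prop) ?_
  rw [Set.uIoc_of_le zero_le_one]
  filter_upwards [ae_restrict_mem measurableSet_Ioc] with t ⟨ht0, ht1⟩
  rw [Real.norm_of_nonneg (by positivity)]
  exact inv_sqrt_mul_one_sub_sq_le hm (by nlinarith)

lemma inv_sqrt_mul_one_sub_sq_eq_sqrt_div_add (ht : t ^ 2 ≤ 1) (hmt : 0 ≤ 1 - m ^ 2 * t ^ 2) :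
    (√((1 - t ^ 2) * (1 - m ^ 2 * t ^ 2)))⁻¹
      = √((1 - m ^ 2 * t ^ 2) / (1 - t ^ 2))
        + m ^ 2 * (t ^ 2 * (√((1 - t ^ 2) * (1 - m ^ 2 * t ^ 2)))⁻¹) := by
  rcases ht.eq_or_lt with ht | ht
  · simp [ht]
  rcases hmt.eq_or_lt with hmt | hmt
  · simp [← hmt]
  rw [Real.sqrt_mul (sub_pos.2 ht).le, Real.sqrt_div' _ (sub_pos.2 ht).le]
  field_simp
  rw [Real.sq_sqrt (by linarith)]
  ring

lemma ellipticE_eq_ellipticK_sub (hm : m ^ 2 < 1) :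
    ellipticE m = ellipticK m
      - m ^ 2 * ∫ t in (0:ℝ)..1, t ^ 2 * (√((1 - t ^ 2) * (1 - m ^ 2 * t ^ 2)))⁻¹ := by
  have hK := intervalIntegrable_ellipticK_integrand hm
  have hJ := (hK.continuousOn_mul (continuousOn_pow 2)).const_mul (m ^ 2)
  rw [ellipticK, ← intervalIntegral.integral_const_mul, ← integral_sub hK hJ, ellipticE]
  refine integral_congr fun t ht ↦ ?_
  rw [Set.uIcc_of_le zero_le_one] at ht
  have ht1 : t ^ 2 ≤ 1 := by nlinarith [ht.1, ht.2]
  rw [eq_sub_iff_add_eq, eq_comm]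
  exact inv_sqrt_mul_one_sub_sq_eq_sqrt_div_add ht1 (by nlinarith)

lemma ellipticK_pos (hm : m ^ 2 < 1) : 0 < ellipticK m := by
  refine intervalIntegral_pos_of_pos_on (intervalIntegrable_ellipticK_integrand hm) ?_
    zero_lt_one
  rintro t ⟨ht0, ht1⟩
  have hu : 0 < 1 - t ^ 2 := by nlinarith
  have hv : 0 < 1 - m ^ 2 * t ^ 2 := by nlinarith
  positivity

end EllipticIntegrals

section Rescaling

variable {a c : ℝ}

lemma sqrt_mul_sub_sq_mul_eq (ha : 0 < a) (hc : 0 < c) (t : ℝ) :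
    √((c ^ 2 - (a * t) ^ 2) * (a ^ 2 - (a * t) ^ 2))
      = a * c * √((1 - t ^ 2) * (1 - (a / c) ^ 2 * t ^ 2)) := by
  have h : (c ^ 2 - (a * t) ^ 2) * (a ^ 2 - (a * t) ^ 2)
      = (a * c) ^ 2 * ((1 - t ^ 2) * (1 - (a / c) ^ 2 * t ^ 2)) := by
    field_simp
  rw [h, Real.sqrt_mul (by positivity), Real.sqrt_sq (by positivity)]

lemma integral_mul_inv_sqrt_mul_sub_sq_eq (g : ℝ → ℝ) (ha : 0 < a) (hc : 0 < c) :
    ∫ s in (0:ℝ)..a, g s * (√((c ^ 2 - s ^ 2) * (a ^ 2 - s ^ 2)))⁻¹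
      = c⁻¹ * ∫ t in (0:ℝ)..1,
          g (a * t) * (√((1 - t ^ 2) * (1 - (a / c) ^ 2 * t ^ 2)))⁻¹ := by
  have h := smul_integral_comp_mul_left (a := 0) (b := 1)
    (fun s ↦ g s * (√((c ^ 2 - s ^ 2) * (a ^ 2 - s ^ 2)))⁻¹) a
  simp only [mul_zero, mul_one, smul_eq_mul, sqrt_mul_sub_sq_mul_eq ha hc] at h
  rw [← h, ← intervalIntegral.integral_const_mul, ← intervalIntegral.integral_const_mul]
  refine integral_congr fun t _ ↦ ?_
  field_simp

end Rescaling

/-- identity (3.3) of Lemma 3.2: `h = c²(E(m)/K(m) − 1)`, i.e.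
`−h·K(m) = c²(K(m) − E(m))`, with `m = a/c`. -/
theorem h_elliptic_eval (a c : ℝ) (ha : 0 < a) (hac : a < c) :
    (-(∫ s in (0:ℝ)..a, s ^ 2 * (Real.sqrt ((c ^ 2 - s ^ 2) * (a ^ 2 - s ^ 2)))⁻¹) /
        (∫ s in (0:ℝ)..a, (Real.sqrt ((c ^ 2 - s ^ 2) * (a ^ 2 - s ^ 2)))⁻¹))
      = c ^ 2 *
        ((∫ t in (0:ℝ)..1, Real.sqrt ((1 - (a / c) ^ 2 * t ^ 2) / (1 - t ^ 2))) /
          (∫ t in (0:ℝ)..1, (Real.sqrt ((1 - t ^ 2) * (1 - (a / c) ^ 2 * t ^ 2)))⁻¹) - 1) ∧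
    -(-(∫ s in (0:ℝ)..a, s ^ 2 * (Real.sqrt ((c ^ 2 - s ^ 2) * (a ^ 2 - s ^ 2)))⁻¹) /
        (∫ s in (0:ℝ)..a, (Real.sqrt ((c ^ 2 - s ^ 2) * (a ^ 2 - s ^ 2)))⁻¹)) *
        (∫ t in (0:ℝ)..1, (Real.sqrt ((1 - t ^ 2) * (1 - (a / c) ^ 2 * t ^ 2)))⁻¹)
      = c ^ 2 *
        ((∫ t in (0:ℝ)..1, (Real.sqrt ((1 - t ^ 2) * (1 - (a / c) ^ 2 * t ^ 2)))⁻¹) -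
          (∫ t in (0:ℝ)..1, Real.sqrt ((1 - (a / c) ^ 2 * t ^ 2) / (1 - t ^ 2)))) := by
  have hc : 0 < c := ha.trans hac
  have hm : (a / c) ^ 2 < 1 := by
    rw [div_pow, div_lt_one (by positivity)]
    gcongr
  have hD := integral_mul_inv_sqrt_mul_sub_sq_eq (fun _ ↦ 1) ha hc
  have hN := integral_mul_inv_sqrt_mul_sub_sq_eq (· ^ 2) ha hc
  simp only [one_mul, mul_pow, mul_assoc, intervalIntegral.integral_const_mul] at hD hN
  change _ = c ^ 2 * (ellipticE (a / c) / ellipticK (a / c) - 1) ∧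
    _ = c ^ 2 * (ellipticK (a / c) - ellipticE (a / c))
  rw [hD, hN, ← ellipticK, ellipticE_eq_ellipticK_sub hm]
  have hK := (ellipticK_pos hm).ne'
  constructor <;> field_simp <;> ring
end

section
/- Let c > 0, ξ ∈ ℝ, 0 < a < c, and set m = a/c. Then the normalization condition ∫₀^{a} (ξ + (c² − a²)/2 − s²)·√((a² − s²)/(c² − s²)) ds = 0 holds if and only if 6ξ·(E(m) − (1 − m²)K(m)) = c²·((1 + m²)·(E(m) − (1 − m²)K(m)) − 2m²(1 − m²)·K(m)), where K(m) = ∫₀¹ ((1 − t²)(1 − m²t²))^{−1/2} dt and E(m) = ∫₀¹ √((1 − m²t²)/(1 − t²)) dt. Equivalently (since E(m) − (1 − m²)K(m) > 0 for 0 < m < 1), ξ = (c²/6)·(1 + m² − 2m²(1 − m²)K(m)/(E(m) − (1 − m²)K(m))). In particular, the modulus 𝔪(ξ) of the Gurevich–Pitaevskii formula and the band edge a(ξ) of the Riemann–Hilbert formula are related by 𝔪(ξ)² = a(ξ)²/c². -/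
/-!
With `m = a / c`, put `w(t) = ((1 - t²)(1 - m²t²))^{-1/2}` and `Jₖ = ∫₀¹ tᵏ w(t) dt`, so that
`K(m) = J₀` and `E(m) = J₀ - m²J₂`. The substitution `s = a t` turns the normalization integral
into `a m ((ξ + (c² - a²)/2)(J₀ - J₂) - a²(J₂ - J₄))`. Differentiating
`t ↦ t √((1 - t²)(1 - m²t²))` gives the recurrence `J₀ - 2(1 + m²)J₂ + 3m²J₄ = 0`, which
eliminates `J₄` and shows the normalization integral to be `c/6` times the difference of the two
sides of the modulus equation. Finally `E - (1 - m²)K = m²(J₀ - J₂) > 0`.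
-/

open MeasureTheory intervalIntegral Set

lemma Real.sqrt_div_eq_mul_inv_sqrt_mul {x : ℝ} (hx : 0 ≤ x) (y : ℝ) :
    √(x / y) = x * (√(y * x))⁻¹ := by
  rw [Real.sqrt_div hx, Real.sqrt_mul' y hx]
  rcases hx.eq_or_lt with rfl | hx
  · simp
  · have := (Real.sqrt_pos.2 hx).ne'
    field_simp
    rw [Real.sq_sqrt hx.le]

namespace GurevichPitaevskii

noncomputable def ellipticWeight (m t : ℝ) : ℝ := (√((1 - t ^ 2) * (1 - m ^ 2 * t ^ 2)))⁻¹

noncomputable def ellipticMoment (m : ℝ) (k : ℕ) : ℝ :=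
  ∫ t in (0:ℝ)..1, t ^ k * ellipticWeight m t

lemma intervalIntegrable_inv_sqrt_one_sub :
    IntervalIntegrable (fun t : ℝ => (√(1 - t))⁻¹) volume 0 1 := by
  have h := (intervalIntegrable_rpow' (a := 0) (b := 1) (r := -(1 / 2)) (by norm_num)).comp_sub_left 1
    |>.symm
  simp only [sub_zero, sub_self] at h
  refine h.congr fun t ht => ?_
  rw [uIoc_of_le zero_le_one] at ht
  rw [Real.sqrt_eq_rpow, ← Real.rpow_neg (by linarith [ht.2])]

lemma ellipticWeight_eq_inv_sqrt_one_sub_mul {m t : ℝ} (ht : t ≤ 1) :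
    ellipticWeight m t = (√(1 - t))⁻¹ * (√((1 + t) * (1 - m ^ 2 * t ^ 2)))⁻¹ := by
  rw [ellipticWeight, ← mul_inv, ← Real.sqrt_mul (by linarith)]
  congr 2
  ring

lemma one_sub_sq_mul_sq_pos {m t : ℝ} (hm : m ^ 2 < 1) (ht : t ^ 2 ≤ 1) :
    0 < 1 - m ^ 2 * t ^ 2 := by
  nlinarith [sq_nonneg m]

lemma intervalIntegrable_mul_ellipticWeight {m : ℝ} (hm : m ^ 2 < 1) {g : ℝ → ℝ}
    (hg : ContinuousOn g (Icc 0 1)) :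
    IntervalIntegrable (fun t => g t * ellipticWeight m t) volume 0 1 := by
  have hpos : ∀ t ∈ Icc (0:ℝ) 1, 0 < (1 + t) * (1 - m ^ 2 * t ^ 2) := fun t ht =>
    mul_pos (by linarith [ht.1]) (one_sub_sq_mul_sq_pos hm (by nlinarith [ht.1, ht.2]))
  have hcont : ContinuousOn (fun t => g t * (√((1 + t) * (1 - m ^ 2 * t ^ 2)))⁻¹) (uIcc 0 1) := by
    rw [uIcc_of_le zero_le_one]
    exact hg.mul <| ContinuousOn.inv₀ (by fun_prop) fun t ht => (Real.sqrt_pos.2 (hpos t ht)).ne'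
  refine (intervalIntegrable_inv_sqrt_one_sub.mul_continuousOn hcont).congr fun t ht => ?_
  rw [uIoc_of_le zero_le_one] at ht
  simp only [ellipticWeight_eq_inv_sqrt_one_sub_mul ht.2]
  ring

lemma integral_quartic_mul_ellipticWeight {m : ℝ} (hm : m ^ 2 < 1) (p q r : ℝ) :
    ∫ t in (0:ℝ)..1, (p + q * t ^ 2 + r * t ^ 4) * ellipticWeight m t
      = p * ellipticMoment m 0 + q * ellipticMoment m 2 + r * ellipticMoment m 4 := by
  have hint : ∀ k : ℕ, IntervalIntegrable (fun t => t ^ k * ellipticWeight m t) volume 0 1 :=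
    fun k => intervalIntegrable_mul_ellipticWeight hm (by fun_prop)
  simp only [ellipticMoment, ← intervalIntegral.integral_const_mul]
  rw [← integral_add ((hint 0).const_mul p) ((hint 2).const_mul q),
    ← integral_add (((hint 0).const_mul p).add ((hint 2).const_mul q)) ((hint 4).const_mul r)]
  congr 1
  ext t
  ring

lemma integral_inv_sqrt_eq_ellipticMoment_zero (m : ℝ) :
    ∫ t in (0:ℝ)..1, (√((1 - t ^ 2) * (1 - m ^ 2 * t ^ 2)))⁻¹ = ellipticMoment m 0 := by
  simp [ellipticMoment, ellipticWeight]

lemma hasDerivAt_mul_sqrt {m t : ℝ} (ht : 0 < (1 - t ^ 2) * (1 - m ^ 2 * t ^ 2)) :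
    HasDerivAt (fun t => t * √((1 - t ^ 2) * (1 - m ^ 2 * t ^ 2)))
      ((1 - 2 * (1 + m ^ 2) * t ^ 2 + 3 * m ^ 2 * t ^ 4) * ellipticWeight m t) t := by
  have hP := ((hasDerivAt_pow 2 t).const_sub 1).fun_mul
    (((hasDerivAt_pow 2 t).const_mul (m ^ 2)).const_sub 1)
  refine ((hasDerivAt_id' t).fun_mul (hP.sqrt ht.ne')).congr_deriv ?_
  have hs := Real.sq_sqrt ht.le
  have hs0 := (Real.sqrt_pos.2 ht).ne'
  rw [ellipticWeight]
  set s := √((1 - t ^ 2) * (1 - m ^ 2 * t ^ 2))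
  push_cast
  field_simp
  linear_combination hs

lemma ellipticMoment_recurrence {m : ℝ} (hm : m ^ 2 < 1) :
    ellipticMoment m 0 - 2 * (1 + m ^ 2) * ellipticMoment m 2 + 3 * m ^ 2 * ellipticMoment m 4
      = 0 := by
  have hftc := integral_eq_sub_of_hasDerivAt_of_le zero_le_one (by fun_prop)
    (fun t ht => hasDerivAt_mul_sqrt (m := m) (t := t) ?_)
    (intervalIntegrable_mul_ellipticWeight hm (g := fun t =>
      1 - 2 * (1 + m ^ 2) * t ^ 2 + 3 * m ^ 2 * t ^ 4) (by fun_prop))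
  · calc _ = ∫ t in (0:ℝ)..1,
          (1 + -(2 * (1 + m ^ 2)) * t ^ 2 + 3 * m ^ 2 * t ^ 4) * ellipticWeight m t := by
          rw [integral_quartic_mul_ellipticWeight hm]; ring
      _ = ∫ t in (0:ℝ)..1,
          (1 - 2 * (1 + m ^ 2) * t ^ 2 + 3 * m ^ 2 * t ^ 4) * ellipticWeight m t := by
          congr 1; ext t; ring
      _ = 0 := by rw [hftc]; simp
  · have ht2 : t ^ 2 < 1 := by nlinarith [ht.1, ht.2]
    exact mul_pos (by linarith) (one_sub_sq_mul_sq_pos hm ht2.le)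

lemma ellipticMoment_two_lt_ellipticMoment_zero {m : ℝ} (hm : m ^ 2 < 1) :
    ellipticMoment m 2 < ellipticMoment m 0 := by
  have hpos : 0 < ∫ t in (0:ℝ)..1, (1 + (-1) * t ^ 2 + 0 * t ^ 4) * ellipticWeight m t := by
    refine intervalIntegral_pos_of_pos_on
      (intervalIntegrable_mul_ellipticWeight hm (by fun_prop)) (fun t ht => ?_) zero_lt_one
    have ht2 : t ^ 2 < 1 := by nlinarith [ht.1, ht.2]
    have hP : 0 < (1 - t ^ 2) * (1 - m ^ 2 * t ^ 2) :=
      mul_pos (by linarith) (one_sub_sq_mul_sq_pos hm ht2.le)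
    exact mul_pos (by linarith) (inv_pos.2 (Real.sqrt_pos.2 hP))
  rw [integral_quartic_mul_ellipticWeight hm] at hpos
  linarith

lemma integral_sqrt_div_eq {m : ℝ} (hm : m ^ 2 < 1) :
    ∫ t in (0:ℝ)..1, √((1 - m ^ 2 * t ^ 2) / (1 - t ^ 2))
      = ellipticMoment m 0 - m ^ 2 * ellipticMoment m 2 := by
  calc _ = ∫ t in (0:ℝ)..1, (1 + (-m ^ 2) * t ^ 2 + 0 * t ^ 4) * ellipticWeight m t := by
        refine integral_congr fun t ht => ?_
        rw [uIcc_of_le zero_le_one] at ht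
        have ht2 : t ^ 2 ≤ 1 := by nlinarith [ht.1, ht.2]
        simp only [ellipticWeight]
        rw [Real.sqrt_div_eq_mul_inv_sqrt_mul (one_sub_sq_mul_sq_pos hm ht2).le]
        ring
    _ = _ := by rw [integral_quartic_mul_ellipticWeight hm]; ring

lemma integral_sub_sq_mul_sqrt_div_eq {a b c : ℝ} (hc : 0 < c) (ha : 0 ≤ a) (hac : a < c) :
    ∫ s in (0:ℝ)..a, (b - s ^ 2) * √((a ^ 2 - s ^ 2) / (c ^ 2 - s ^ 2))
      = a * (a / c) * (b * (ellipticMoment (a / c) 0 - ellipticMoment (a / c) 2)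
          - a ^ 2 * (ellipticMoment (a / c) 2 - ellipticMoment (a / c) 4)) := by
  set m := a / c with hm_def
  have hm0 : 0 ≤ m := by positivity
  have hm : m ^ 2 < 1 := by nlinarith [(div_lt_one hc).2 hac]
  have hsub := smul_integral_comp_mul_left
    (fun s => (b - s ^ 2) * √((a ^ 2 - s ^ 2) / (c ^ 2 - s ^ 2))) a (a := 0) (b := 1)
  simp only [smul_eq_mul, mul_zero, mul_one] at hsub
  rw [← hsub]
  calc _ = a * ∫ t in (0:ℝ)..1, (m * b + (-(m * b) - m * a ^ 2) * t ^ 2 + m * a ^ 2 * t ^ 4)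
        * ellipticWeight m t := by
        congr 1
        refine integral_congr fun t ht => ?_
        rw [uIcc_of_le zero_le_one] at ht
        have ht2 : t ^ 2 ≤ 1 := by nlinarith [ht.1, ht.2]
        have hmt := one_sub_sq_mul_sq_pos hm ht2
        have hratio : (a ^ 2 - (a * t) ^ 2) / (c ^ 2 - (a * t) ^ 2)
            = m ^ 2 * ((1 - t ^ 2) / (1 - m ^ 2 * t ^ 2)) := by
          rw [hm_def] at hmt ⊢
          field_simp
        simp only [ellipticWeight]
        rw [hratio, Real.sqrt_mul (sq_nonneg m), Real.sqrt_sq hm0,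
          Real.sqrt_div_eq_mul_inv_sqrt_mul (by linarith), mul_comm (1 - m ^ 2 * t ^ 2)]
        ring
    _ = _ := by rw [integral_quartic_mul_ellipticWeight hm]; ring

end GurevichPitaevskii

open GurevichPitaevskii in
/-- Lemma 3.1: with `m = a/c`, `K = K(m)`, `E = E(m)`, the normalization
condition holds iff `6ξ(E − (1 − m²)K) = c²((1 + m²)(E − (1 − m²)K) − 2m²(1 − m²)K)`;
equivalently (since `E − (1 − m²)K > 0`),
`ξ = (c²/6)(1 + m² − 2m²(1 − m²)K/(E − (1 − m²)K))`. Thus the Gurevich–Pitaevskii modulus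
satisfies `𝔪(ξ)² = a(ξ)²/c²`. -/
theorem GP_modulus_equation (c ξ a : ℝ) (hc : 0 < c) (ha : 0 < a) (hac : a < c) :
    0 < (∫ t in (0:ℝ)..1, Real.sqrt ((1 - (a / c) ^ 2 * t ^ 2) / (1 - t ^ 2))) -
        (1 - (a / c) ^ 2) *
          (∫ t in (0:ℝ)..1, (Real.sqrt ((1 - t ^ 2) * (1 - (a / c) ^ 2 * t ^ 2)))⁻¹) ∧
    ((∫ s in (0:ℝ)..a,
        (ξ + (c ^ 2 - a ^ 2) / 2 - s ^ 2) * Real.sqrt ((a ^ 2 - s ^ 2) / (c ^ 2 - s ^ 2))) = 0 ↔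
      6 * ξ * ((∫ t in (0:ℝ)..1, Real.sqrt ((1 - (a / c) ^ 2 * t ^ 2) / (1 - t ^ 2))) -
          (1 - (a / c) ^ 2) *
            (∫ t in (0:ℝ)..1, (Real.sqrt ((1 - t ^ 2) * (1 - (a / c) ^ 2 * t ^ 2)))⁻¹))
        = c ^ 2 *
          ((1 + (a / c) ^ 2) *
              ((∫ t in (0:ℝ)..1, Real.sqrt ((1 - (a / c) ^ 2 * t ^ 2) / (1 - t ^ 2))) -
                (1 - (a / c) ^ 2) *
                  (∫ t in (0:ℝ)..1, (Real.sqrt ((1 - t ^ 2) * (1 - (a / c) ^ 2 * t ^ 2)))⁻¹)) -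
            2 * (a / c) ^ 2 * (1 - (a / c) ^ 2) *
              (∫ t in (0:ℝ)..1, (Real.sqrt ((1 - t ^ 2) * (1 - (a / c) ^ 2 * t ^ 2)))⁻¹))) ∧
    ((∫ s in (0:ℝ)..a,
        (ξ + (c ^ 2 - a ^ 2) / 2 - s ^ 2) * Real.sqrt ((a ^ 2 - s ^ 2) / (c ^ 2 - s ^ 2))) = 0 ↔
      ξ = c ^ 2 / 6 *
        (1 + (a / c) ^ 2 -
          2 * (a / c) ^ 2 * (1 - (a / c) ^ 2) *
              (∫ t in (0:ℝ)..1, (Real.sqrt ((1 - t ^ 2) * (1 - (a / c) ^ 2 * t ^ 2)))⁻¹) /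
            ((∫ t in (0:ℝ)..1, Real.sqrt ((1 - (a / c) ^ 2 * t ^ 2) / (1 - t ^ 2))) -
              (1 - (a / c) ^ 2) *
                (∫ t in (0:ℝ)..1, (Real.sqrt ((1 - t ^ 2) * (1 - (a / c) ^ 2 * t ^ 2)))⁻¹)))) := by
  have hm : (a / c) ^ 2 < 1 := by
    nlinarith [(div_lt_one hc).2 hac, div_pos ha hc]
  rw [integral_sub_sq_mul_sqrt_div_eq hc ha.le hac, integral_sqrt_div_eq hm,
    integral_inv_sqrt_eq_ellipticMoment_zero]
  have hrec := ellipticMoment_recurrence hm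
  have hJ := ellipticMoment_two_lt_ellipticMoment_zero hm
  set m := a / c with hm_def
  set J₀ := ellipticMoment m 0
  set J₂ := ellipticMoment m 2
  set J₄ := ellipticMoment m 4
  set D := J₀ - m ^ 2 * J₂ - (1 - m ^ 2) * J₀
  have hDpos : 0 < D := by
    rw [show D = m ^ 2 * (J₀ - J₂) by ring]
    exact mul_pos (pow_pos (div_pos ha hc) 2) (sub_pos.2 hJ)
  have hfactor : a * m * ((ξ + (c ^ 2 - a ^ 2) / 2) * (J₀ - J₂) - a ^ 2 * (J₂ - J₄))
      = c / 6 * (6 * ξ * D - c ^ 2 * ((1 + m ^ 2) * D - 2 * m ^ 2 * (1 - m ^ 2) * J₀)) := by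
    rw [show a = m * c by rw [hm_def]; field_simp]
    linear_combination (m ^ 2 * c ^ 3 / 3) * hrec
  have hc6 : c / 6 ≠ 0 := by positivity
  refine ⟨hDpos, ?_, ?_⟩
  · rw [hfactor, mul_eq_zero, or_iff_right hc6, sub_eq_zero]
  · rw [hfactor, mul_eq_zero, or_iff_right hc6, sub_eq_zero]
    field_simp
end

section
/- Let c > 0 and let a : (−c²/2, c²/3) → (0, c) be differentiable with ∫₀^{a(ξ)} (ξ + (c² − a(ξ)²)/2 − s²)·√((a(ξ)² − s²)/(c² − s²)) ds = 0 for every ξ in the interval. Define h(ξ) = −(∫₀^{a(ξ)} s²·((c² − s²)(a(ξ)² − s²))^{−1/2} ds)/(∫₀^{a(ξ)} ((c² − s²)(a(ξ)² − s²))^{−1/2} ds) and z(ξ) = (12ξ(c² − a(ξ)²) + 3c⁴ + 9a(ξ)⁴ − 6a(ξ)²c²)/2. Then for every ξ ∈ (−c²/2, c²/3), z′(ξ) = 6(c² + a(ξ)²) + 12h(ξ), i.e. (1/6)·(dz/dξ) = c² + a(ξ)² + 2h(ξ). -/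
/-!
Substituting `s = a sin θ` turns every integral in the statement into a moment
`∫₀^{π/2} sin^j θ · cos^k θ / √(c² - a² sin² θ) dθ` with a continuous integrand; write `M_j`
(`k = 0`) and `L_j = M_j - M_{j+2}` (`k = 2`), and `m = a²`. The normalization becomes
`(ξ + (c² - m)/2) L₀ = m L₂`. Differentiating `L_j` in `m` under the integral and integrating
`d/dθ (sin^{j+1} θ cos θ / √(c² - m sin² θ))` by parts gives `2m L_j' = M_{j+2} - (j+1) L_j`, so
differentiating the normalization in `ξ` yields Lemma 2.1, `m' (3m - 2ξ - c²) M₀ = 4m (M₀ - M₂)`,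
i.e. `m' (3m - 2ξ - c²) = 4 (h + m)` with `h = -m M₂ / M₀`. Since
`z' = 6 (c² - m) + 3 m' (3m - 2ξ - c²)`, the formula follows.
-/

open Real Set Filter Topology intervalIntegral
open MeasureTheory (volume measure_singleton measure_eq_zero_iff_ae_notMem)

noncomputable def sinMoment (κ m : ℝ) (j : ℕ) : ℝ :=
  ∫ θ in (0:ℝ)..π / 2, sin θ ^ j / √(κ - m * sin θ ^ 2)

noncomputable def sinCosMoment (κ m : ℝ) (j : ℕ) : ℝ :=
  ∫ θ in (0:ℝ)..π / 2, sin θ ^ j * cos θ ^ 2 / √(κ - m * sin θ ^ 2)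

section Moments

variable {κ m : ℝ}

lemma min_le_sub_mul_sin_sq {μ : ℝ} (hm : m ≤ μ) (θ : ℝ) :
    min κ (κ - μ) ≤ κ - m * sin θ ^ 2 := by
  have h0 := sq_nonneg (sin θ)
  have h1 := sin_sq_le_one θ
  rcases le_total 0 m with h | h
  · nlinarith [min_le_right κ (κ - μ)]
  · nlinarith [min_le_left κ (κ - μ)]

lemma sub_mul_sin_sq_pos_s16 (hκ : 0 < κ) (hm : m < κ) (θ : ℝ) : 0 < κ - m * sin θ ^ 2 :=
  (lt_min hκ (sub_pos.2 hm)).trans_le (min_le_sub_mul_sin_sq le_rfl θ)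

lemma continuous_div_sqrt_sub_mul_sin_sq (hκ : 0 < κ) (hm : m < κ) {f : ℝ → ℝ}
    (hf : Continuous f) : Continuous fun θ => f θ / √(κ - m * sin θ ^ 2) :=
  hf.div (by fun_prop) fun θ => (sqrt_pos.2 (sub_mul_sin_sq_pos_s16 hκ hm θ)).ne'

lemma sinCosMoment_eq_sub (hκ : 0 < κ) (hm : m < κ) (j : ℕ) :
    sinCosMoment κ m j = sinMoment κ m j - sinMoment κ m (j + 2) := by
  rw [sinMoment, sinMoment, ← integral_sub
    ((continuous_div_sqrt_sub_mul_sin_sq hκ hm (by fun_prop)).intervalIntegrable _ _)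
    ((continuous_div_sqrt_sub_mul_sin_sq hκ hm (by fun_prop)).intervalIntegrable _ _)]
  refine integral_congr fun θ _ => ?_
  rw [cos_sq', ← sub_div]
  ring

lemma sinMoment_pos (hκ : 0 < κ) (hm : m < κ) (j : ℕ) : 0 < sinMoment κ m j :=
  intervalIntegral_pos_of_pos_on
    ((continuous_div_sqrt_sub_mul_sin_sq hκ hm (by fun_prop)).intervalIntegrable _ _)
    (fun θ hθ => div_pos (pow_pos (sin_pos_of_pos_of_lt_pi hθ.1 (by linarith [hθ.2, pi_pos])) j)
      (sqrt_pos.2 (sub_mul_sin_sq_pos_s16 hκ hm θ))) (by positivity)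

lemma hasDerivAt_sin_pow_mul_cos_div_sqrt (κ m : ℝ) (j : ℕ) {θ : ℝ}
    (hθ : 0 < κ - m * sin θ ^ 2) :
    HasDerivAt (fun θ => sin θ ^ (j + 1) * cos θ / √(κ - m * sin θ ^ 2))
      ((j + 1) * (sin θ ^ j * cos θ ^ 2 / √(κ - m * sin θ ^ 2))
        - sin θ ^ (j + 2) / √(κ - m * sin θ ^ 2)
        + 2 * m * (sin θ ^ (j + 2) * cos θ ^ 2 / (2 * √(κ - m * sin θ ^ 2) ^ 3))) θ := by
  have hρ := (((hasDerivAt_sin θ).fun_pow 2).const_mul m).const_sub κ |>.sqrt hθ.ne'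
  refine ((((hasDerivAt_sin θ).fun_pow (j + 1)).fun_mul (hasDerivAt_cos θ)).fun_div hρ
    (sqrt_pos.2 hθ).ne').congr_deriv ?_
  field_simp
  push_cast [Nat.add_sub_cancel, Nat.sub_self]
  ring

lemma two_mul_integral_sin_pow_mul_cos_sq_div (hκ : 0 < κ) (hm : m < κ) (j : ℕ) :
    2 * m * ∫ θ in (0:ℝ)..π / 2, sin θ ^ (j + 2) * cos θ ^ 2 / (2 * √(κ - m * sin θ ^ 2) ^ 3)
      = sinMoment κ m (j + 2) - (j + 1) * sinCosMoment κ m j := by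
  have hρ0 (θ : ℝ) : √(κ - m * sin θ ^ 2) ≠ 0 := (sqrt_pos.2 (sub_mul_sin_sq_pos_s16 hκ hm θ)).ne'
  have iL := (continuous_div_sqrt_sub_mul_sin_sq hκ hm
    (f := fun θ => sin θ ^ j * cos θ ^ 2) (by fun_prop)).intervalIntegrable (μ := volume) 0 (π / 2)
  have iM := (continuous_div_sqrt_sub_mul_sin_sq hκ hm
    (f := fun θ => sin θ ^ (j + 2)) (by fun_prop)).intervalIntegrable (μ := volume) 0 (π / 2)
  have iD : IntervalIntegrable
      (fun θ => sin θ ^ (j + 2) * cos θ ^ 2 / (2 * √(κ - m * sin θ ^ 2) ^ 3)) volume 0 (π / 2) :=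
    (Continuous.div (by fun_prop) (by fun_prop) fun θ => by simp [hρ0 θ]).intervalIntegrable _ _
  have hftc := integral_eq_sub_of_hasDerivAt
    (fun θ _ => hasDerivAt_sin_pow_mul_cos_div_sqrt κ m j (sub_mul_sin_sq_pos_s16 hκ hm θ))
    (((iL.const_mul _).sub iM).add (iD.const_mul _))
  rw [integral_add ((iL.const_mul _).sub iM) (iD.const_mul _), integral_sub (iL.const_mul _) iM,
    integral_const_mul, integral_const_mul] at hftc
  simp only [sin_zero, cos_pi_div_two, zero_pow (Nat.succ_ne_zero _), zero_mul, mul_zero,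
    zero_div, sub_zero] at hftc
  rw [sinMoment, sinCosMoment]
  linarith

lemma hasDerivAt_sinCosMoment_integral (hκ : 0 < κ) (hm : m < κ) (j : ℕ) :
    HasDerivAt (fun x => sinCosMoment κ x j)
      (∫ θ in (0:ℝ)..π / 2, sin θ ^ (j + 2) * cos θ ^ 2 / (2 * √(κ - m * sin θ ^ 2) ^ 3)) m := by
  set δ := min κ ((κ - m) / 2)
  have hδ : 0 < δ := lt_min hκ (by linarith)
  have hball : Metric.ball m ((κ - m) / 2) ∈ 𝓝 m := Metric.ball_mem_nhds m (by linarith)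
  have hlow : ∀ x ∈ Metric.ball m ((κ - m) / 2), ∀ θ, δ ≤ κ - x * sin θ ^ 2 := by
    intro x hx θ
    have hx' := (abs_lt.1 (Real.dist_eq x m ▸ Metric.mem_ball.1 hx)).2
    simpa [δ, show κ - (κ + m) / 2 = (κ - m) / 2 by ring] using
      min_le_sub_mul_sin_sq (κ := κ) (μ := (κ + m) / 2) (by linarith) θ
  refine (hasDerivAt_integral_of_dominated_loc_of_deriv_le
    (F := fun x θ => sin θ ^ j * cos θ ^ 2 / √(κ - x * sin θ ^ 2))
    (F' := fun x θ => sin θ ^ (j + 2) * cos θ ^ 2 / (2 * √(κ - x * sin θ ^ 2) ^ 3))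
    (bound := fun _ => 1 / (2 * √δ ^ 3))
    hball (.of_forall fun x => (by fun_prop : Measurable fun θ =>
      sin θ ^ j * cos θ ^ 2 / √(κ - x * sin θ ^ 2)).aestronglyMeasurable)
    ((continuous_div_sqrt_sub_mul_sin_sq hκ hm (by fun_prop)).intervalIntegrable _ _)
    (by fun_prop : Measurable fun θ =>
      sin θ ^ (j + 2) * cos θ ^ 2 / (2 * √(κ - m * sin θ ^ 2) ^ 3)).aestronglyMeasurable
    (.of_forall fun θ _ x hx => ?_) intervalIntegrable_const
    (.of_forall fun θ _ x hx => ?_)).2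
  · have hρ : √δ ^ 3 ≤ √(κ - x * sin θ ^ 2) ^ 3 := by
      gcongr; exact hlow x hx θ
    have hρ0 : 0 < √(κ - x * sin θ ^ 2) := sqrt_pos.2 (hδ.trans_le (hlow x hx θ))
    have hnum : |sin θ ^ (j + 2) * cos θ ^ 2| ≤ 1 := by
      rw [abs_mul, abs_pow, abs_pow]
      exact mul_le_one₀ (pow_le_one₀ (abs_nonneg _) (abs_sin_le_one θ)) (by positivity)
        (pow_le_one₀ (abs_nonneg _) (abs_cos_le_one θ))
    rw [Real.norm_eq_abs, abs_div, abs_of_pos (by positivity : 0 < 2 * √(κ - x * sin θ ^ 2) ^ 3)]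
    exact div_le_div₀ zero_le_one hnum (by positivity) (by gcongr)
  · have hx := hδ.trans_le (hlow x hx θ)
    have hρ := ((hasDerivAt_id' x).mul_const (sin θ ^ 2)).const_sub κ |>.sqrt hx.ne'
    refine ((hasDerivAt_const x (sin θ ^ j * cos θ ^ 2)).fun_div hρ
      (sqrt_pos.2 hx).ne').congr_deriv ?_
    field_simp
    ring

lemma hasDerivAt_sinCosMoment (hκ : 0 < κ) (hm : m < κ) (hm0 : m ≠ 0) (j : ℕ) :
    HasDerivAt (fun x => sinCosMoment κ x j)
      ((sinMoment κ m (j + 2) - (j + 1) * sinCosMoment κ m j) / (2 * m)) m := by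
  rw [← two_mul_integral_sin_pow_mul_cos_sq_div hκ hm, mul_div_cancel_left₀ _ (by positivity)]
  exact hasDerivAt_sinCosMoment_integral hκ hm j

end Moments

lemma integral_comp_mul_sin {α : ℝ} (hα : 0 ≤ α) (g : ℝ → ℝ) :
    ∫ s in (0:ℝ)..α, g s = ∫ θ in (0:ℝ)..π / 2, g (α * sin θ) * (α * cos θ) := by
  have hπ : (0:ℝ) ≤ π / 2 := by positivity
  have := integral_comp_mul_deriv_of_deriv_nonneg (g := g) (a := 0) (b := π / 2)
    (f := fun θ => α * sin θ) (by fun_prop) (fun θ _ => (hasDerivAt_sin θ).const_mul α)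
    (fun θ hθ => by
      rw [min_eq_left hπ, max_eq_right hπ] at hθ
      exact mul_nonneg hα (cos_nonneg_of_mem_Icc ⟨by linarith [hθ.1], hθ.2.le⟩))
  simpa using this.symm

lemma integral_pow_mul_inv_sqrt (κ : ℝ) {α : ℝ} (hα : 0 < α) (j : ℕ) :
    ∫ s in (0:ℝ)..α, s ^ j * (√((κ - s ^ 2) * (α ^ 2 - s ^ 2)))⁻¹
      = α ^ j * sinMoment κ (α ^ 2) j := by
  rw [integral_comp_mul_sin hα.le, sinMoment, ← integral_const_mul]
  -- the substituted integrand is `0` at `θ = π / 2`, where `cos θ` vanishes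
  refine integral_congr_ae ((measure_eq_zero_iff_ae_notMem.1
    (measure_singleton (π / 2))).mono fun θ hne hθ => ?_)
  rw [uIoc_of_le (by positivity)] at hθ
  have hcos : 0 < cos θ :=
    cos_pos_of_mem_Ioo ⟨by linarith [hθ.1, pi_pos], lt_of_le_of_ne hθ.2 hne⟩
  have hfactor : (κ - (α * sin θ) ^ 2) * (α ^ 2 - (α * sin θ) ^ 2)
      = (κ - α ^ 2 * sin θ ^ 2) * (α * cos θ) ^ 2 := by
    rw [mul_pow α (cos θ), cos_sq']; ring
  rw [hfactor, sqrt_mul' _ (sq_nonneg _), sqrt_sq (mul_pos hα hcos).le]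
  field_simp
  ring

lemma integral_sub_sq_mul_sqrt_div {κ α : ℝ} (hκ : 0 < κ) (hα : 0 ≤ α) (hακ : α ^ 2 < κ)
    (X : ℝ) :
    ∫ s in (0:ℝ)..α, (X - s ^ 2) * √((α ^ 2 - s ^ 2) / (κ - s ^ 2))
      = α ^ 2 * (X * sinCosMoment κ (α ^ 2) 0 - α ^ 2 * sinCosMoment κ (α ^ 2) 2) := by
  have iL (j : ℕ) := (continuous_div_sqrt_sub_mul_sin_sq hκ hακ
    (f := fun θ => sin θ ^ j * cos θ ^ 2) (by fun_prop)).intervalIntegrable (μ := volume) 0 (π / 2)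
  rw [sinCosMoment, sinCosMoment, ← integral_const_mul, ← integral_const_mul,
    ← integral_sub ((iL 0).const_mul _) ((iL 2).const_mul _), ← integral_const_mul,
    integral_comp_mul_sin hα]
  refine integral_congr fun θ hθ => ?_
  rw [uIcc_of_le (by positivity)] at hθ
  have hcos : 0 ≤ α * cos θ :=
    mul_nonneg hα (cos_nonneg_of_mem_Icc ⟨by linarith [hθ.1, pi_pos], hθ.2⟩)
  have hquot : (α ^ 2 - (α * sin θ) ^ 2) / (κ - (α * sin θ) ^ 2)
      = (α * cos θ) ^ 2 / (κ - α ^ 2 * sin θ ^ 2) := by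
    rw [mul_pow α (cos θ), cos_sq']; ring
  rw [hquot, sqrt_div (sq_nonneg _), sqrt_sq hcos]
  ring

lemma mul_sinCosMoment_eq_of_integral_eq_zero {κ α X : ℝ} (hκ : 0 < κ) (hα : 0 < α)
    (hακ : α ^ 2 < κ) (h : ∫ s in (0:ℝ)..α, (X - s ^ 2) * √((α ^ 2 - s ^ 2) / (κ - s ^ 2)) = 0) :
    X * sinCosMoment κ (α ^ 2) 0 = α ^ 2 * sinCosMoment κ (α ^ 2) 2 := by
  rw [integral_sub_sq_mul_sqrt_div hκ hα.le hακ] at h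
  linear_combination (mul_eq_zero.1 h).resolve_left (by positivity)

theorem mul_sinMoment_eq_of_normalized {κ ξ m' : ℝ} {m : ℝ → ℝ} (hm : HasDerivAt m m' ξ)
    (hκ : 0 < κ) (hm0 : 0 < m ξ) (hmκ : m ξ < κ)
    (hN : ∀ᶠ t in 𝓝 ξ,
      (t + (κ - m t) / 2) * sinCosMoment κ (m t) 0 = m t * sinCosMoment κ (m t) 2) :
    m' * (3 * m ξ - 2 * ξ - κ) * sinMoment κ (m ξ) 0
      = 4 * m ξ * (sinMoment κ (m ξ) 0 - sinMoment κ (m ξ) 2) := by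
  have hL (j : ℕ) := (hasDerivAt_sinCosMoment hκ hmκ hm0.ne' j).comp ξ hm
  have hΨ := (((hasDerivAt_id' ξ).add ((hm.const_sub κ).div_const 2)).mul (hL 0)).sub
    (hm.mul (hL 2))
  have hΨ0 : HasDerivAt (fun t => (t + (κ - m t) / 2) * sinCosMoment κ (m t) 0
      - m t * sinCosMoment κ (m t) 2) 0 ξ :=
    (hasDerivAt_const ξ 0).congr_of_eventuallyEq (hN.mono fun t ht => sub_eq_zero.2 ht)
  have hderiv := hΨ.unique hΨ0
  have hN0 := hN.self_of_nhds
  simp only [Function.comp_apply, Pi.add_apply] at hderiv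
  field_simp at hderiv
  rw [sinCosMoment_eq_sub hκ hmκ 0, sinCosMoment_eq_sub hκ hmκ 2] at hderiv hN0
  norm_num at hderiv hN0
  -- with `Ψ t = (t + (κ - m t) / 2) L₀ - m t L₂`, `hderiv` is `4 m Ψ'(ξ) = 0` in terms of
  -- `M₀, M₂, M₄`, and the goal (left minus right) is `-4 m Ψ'(ξ) - 4 m' Ψ(ξ)`
  linear_combination (-1) * hderiv - 4 * m' * hN0

lemma hasDerivAt_z {a : ℝ → ℝ} {a' ξ : ℝ} (c : ℝ) (ha : HasDerivAt a a' ξ) :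
    HasDerivAt
      (fun t => (12 * t * (c ^ 2 - a t ^ 2) + 3 * c ^ 4 + 9 * a t ^ 4 - 6 * a t ^ 2 * c ^ 2) / 2)
      (6 * (c ^ 2 - a ξ ^ 2) + 3 * (2 * a ξ * a') * (3 * a ξ ^ 2 - 2 * ξ - c ^ 2)) ξ := by
  have hm := ha.fun_pow 2
  refine ((((((hasDerivAt_id' ξ).const_mul 12).fun_mul (hm.const_sub (c ^ 2))).add_const
    (3 * c ^ 4)).fun_add ((ha.fun_pow 4).const_mul 9)).fun_sub
    ((hm.const_mul 6).mul_const (c ^ 2))).div_const 2 |>.congr_deriv ?_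
  norm_num
  ring

theorem z_derivative_formula_general (c : ℝ) (a : ℝ → ℝ)
    (hrange : ∀ ξ ∈ Set.Ioo (-c ^ 2 / 2) (c ^ 2 / 3), 0 < a ξ ∧ a ξ < c)
    (hdiff : ∀ ξ ∈ Set.Ioo (-c ^ 2 / 2) (c ^ 2 / 3), DifferentiableAt ℝ a ξ)
    (hnorm : ∀ ξ ∈ Set.Ioo (-c ^ 2 / 2) (c ^ 2 / 3),
      ∫ s in (0:ℝ)..(a ξ),
        (ξ + (c ^ 2 - (a ξ) ^ 2) / 2 - s ^ 2) *
          Real.sqrt (((a ξ) ^ 2 - s ^ 2) / (c ^ 2 - s ^ 2)) = 0) :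
    ∀ ξ ∈ Set.Ioo (-c ^ 2 / 2) (c ^ 2 / 3),
      deriv (fun t =>
          (12 * t * (c ^ 2 - (a t) ^ 2) + 3 * c ^ 4 + 9 * (a t) ^ 4 - 6 * (a t) ^ 2 * c ^ 2) / 2) ξ
        = 6 * (c ^ 2 + (a ξ) ^ 2) +
          12 * (-(∫ s in (0:ℝ)..(a ξ), s ^ 2 * (Real.sqrt ((c ^ 2 - s ^ 2) * ((a ξ) ^ 2 - s ^ 2)))⁻¹) /
            (∫ s in (0:ℝ)..(a ξ), (Real.sqrt ((c ^ 2 - s ^ 2) * ((a ξ) ^ 2 - s ^ 2)))⁻¹)) := by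
  intro ξ hξ
  obtain ⟨ha0, hac⟩ := hrange ξ hξ
  have hκ : 0 < c ^ 2 := by nlinarith
  have hmκ : a ξ ^ 2 < c ^ 2 := by nlinarith
  have ha := (hdiff ξ hξ).hasDerivAt
  have hm : HasDerivAt (fun t => a t ^ 2) (2 * a ξ * deriv a ξ) ξ :=
    (ha.fun_pow 2).congr_deriv (by norm_num)
  have hrel := mul_sinMoment_eq_of_normalized hm hκ (by positivity) hmκ <| by
    filter_upwards [isOpen_Ioo.mem_nhds hξ] with t ht
    obtain ⟨ht0, htc⟩ := hrange t ht
    exact mul_sinCosMoment_eq_of_integral_eq_zero hκ ht0 (by nlinarith) (hnorm t ht)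
  have hM0 : 0 < sinMoment (c ^ 2) (a ξ ^ 2) 0 := sinMoment_pos hκ hmκ 0
  have hI0 := integral_pow_mul_inv_sqrt (c ^ 2) ha0 0
  simp only [pow_zero, one_mul] at hI0
  rw [(hasDerivAt_z c ha).deriv, hI0, integral_pow_mul_inv_sqrt (c ^ 2) ha0 2]
  field_simp
  linear_combination 3 * hrel

/-- identity (2.17) of Lemma 2.3:
`z′(ξ) = 6(c² + a(ξ)²) + 12h(ξ)`, where
`z(ξ) = (12ξ(c² − a(ξ)²) + 3c⁴ + 9a(ξ)⁴ − 6a(ξ)²c²)/2`. -/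
theorem z_derivative_formula (c : ℝ) (hc : 0 < c) (a : ℝ → ℝ)
    (hrange : ∀ ξ ∈ Set.Ioo (-c ^ 2 / 2) (c ^ 2 / 3), 0 < a ξ ∧ a ξ < c)
    (hdiff : ∀ ξ ∈ Set.Ioo (-c ^ 2 / 2) (c ^ 2 / 3), DifferentiableAt ℝ a ξ)
    (hnorm : ∀ ξ ∈ Set.Ioo (-c ^ 2 / 2) (c ^ 2 / 3),
      ∫ s in (0:ℝ)..(a ξ),
        (ξ + (c ^ 2 - (a ξ) ^ 2) / 2 - s ^ 2) *
          Real.sqrt (((a ξ) ^ 2 - s ^ 2) / (c ^ 2 - s ^ 2)) = 0) :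
    ∀ ξ ∈ Set.Ioo (-c ^ 2 / 2) (c ^ 2 / 3),
      deriv (fun t =>
          (12 * t * (c ^ 2 - (a t) ^ 2) + 3 * c ^ 4 + 9 * (a t) ^ 4 - 6 * (a t) ^ 2 * c ^ 2) / 2) ξ
        = 6 * (c ^ 2 + (a ξ) ^ 2) +
          12 * (-(∫ s in (0:ℝ)..(a ξ), s ^ 2 * (Real.sqrt ((c ^ 2 - s ^ 2) * ((a ξ) ^ 2 - s ^ 2)))⁻¹) /
            (∫ s in (0:ℝ)..(a ξ), (Real.sqrt ((c ^ 2 - s ^ 2) * ((a ξ) ^ 2 - s ^ 2)))⁻¹)) :=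
  z_derivative_formula_general c a hrange hdiff hnorm
end
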